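/- arXiv:1812.02671 — 4 statements merged into one kernel-verified Lean document; each statement's English description precedes it below -/
import Mathlib

section
/- Let M be a topological space, n ∈ ℕ, and for each k ∈ ℕ let f_k : M → ℕ be a lower semicontinuous function, such that f_k(x) ≤ f_{k+1}(x) ≤ n for all k ∈ ℕ and all x ∈ M. Then every nonempty open subset U of M contains a nonempty open subset V such that each of the functions f_k is constant on V. -/
open Set

/-- One lower semicontinuous ℕ-valued function bounded by `n` is constant on some
nonempty open subset of any nonempty open set. -/
lemma aux_const {M : Type*} [TopologicalSpace M] (n : ℕ) (g : M → ℕ)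
    (hlsc : LowerSemicontinuous g) (hbd : ∀ x, g x ≤ n)
    (U : Set M) (hU : IsOpen U) (hne : U.Nonempty) :
    ∃ V : Set M, V ⊆ U ∧ IsOpen V ∧ V.Nonempty ∧ ∃ c, ∀ x ∈ V, g x = c := by
  -- the image of U under g is a nonempty bounded set of naturals; take its max
  have hbdd : BddAbove (g '' U) := ⟨n, by rintro _ ⟨x, -, rfl⟩; exact hbd x⟩
  have hneim : (g '' U).Nonempty := hne.image g
  have hmem : sSup (g '' U) ∈ g '' U := Nat.sSup_mem hneim hbdd
  obtain ⟨x₀, hx₀U, hx₀⟩ := hmem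
  set c := sSup (g '' U) with hc
  have hle : ∀ x ∈ U, g x ≤ c := fun x hx => le_csSup hbdd ⟨x, hx, rfl⟩
  rcases Nat.eq_zero_or_pos c with h0 | hpos
  · exact ⟨U, le_refl U, hU, hne, 0, fun x hx => Nat.le_zero.mp (h0 ▸ hle x hx)⟩
  · have hlt : c - 1 < g x₀ := by omega
    have hev := hlsc x₀ (c - 1) hlt
    obtain ⟨t, ht, htop, hx₀t⟩ := eventually_nhds_iff.mp hev
    refine ⟨t ∩ U, inter_subset_right, htop.inter hU, ⟨x₀, hx₀t, hx₀U⟩, c, ?_⟩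
    rintro x ⟨hxt, hxU⟩
    have h1 := ht x hxt
    have h2 := hle x hxU
    omega

/-- For finitely many indices, make all `f k`, `k < K`, constant on a nonempty open subset. -/
lemma aux_fin {M : Type*} [TopologicalSpace M] (n : ℕ) (f : ℕ → M → ℕ)
    (hlsc : ∀ k, LowerSemicontinuous (f k)) (hbd : ∀ k x, f k x ≤ n) (K : ℕ) :
    ∀ U : Set M, IsOpen U → U.Nonempty →
      ∃ V : Set M, V ⊆ U ∧ IsOpen V ∧ V.Nonempty ∧
        ∀ k < K, ∀ x ∈ V, ∀ y ∈ V, f k x = f k y := by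
  induction K with
  | zero => exact fun U hU hne => ⟨U, le_refl U, hU, hne, fun k hk => by omega⟩
  | succ K ih =>
    intro U hU hne
    obtain ⟨W, hWU, hWop, hWne, hW⟩ := ih U hU hne
    obtain ⟨V, hVW, hVop, hVne, c, hc⟩ := aux_const n (f K) (hlsc K) (hbd K) W hWop hWne
    refine ⟨V, hVW.trans hWU, hVop, hVne, ?_⟩
    intro k hk x hx y hy
    rcases Nat.lt_succ_iff_lt_or_eq.mp hk with h | rfl
    · exact hW k h x (hVW hx) y (hVW hy)
    · rw [hc x hx, hc y hy]

theorem stmt6 {M : Type*} [TopologicalSpace M] (n : ℕ) (f : ℕ → M → ℕ)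
    (hlsc : ∀ k, LowerSemicontinuous (f k))
    (hmono : ∀ k x, f k x ≤ f (k + 1) x)
    (hbd : ∀ k x, f k x ≤ n) :
    ∀ U : Set M, IsOpen U → U.Nonempty →
      ∃ V : Set M, V ⊆ U ∧ IsOpen V ∧ V.Nonempty ∧
        ∀ k, ∀ x ∈ V, ∀ y ∈ V, f k x = f k y := by
  intro U hU hne
  have hmono' : ∀ x, Monotone fun k => f k x := fun x =>
    monotone_nat_of_le_succ fun k => hmono k x
  -- the overall supremum of all values on U
  set S : Set ℕ := {m | ∃ k, ∃ x ∈ U, f k x = m} with hS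
  have hSne : S.Nonempty := ⟨f 0 hne.choose, 0, hne.choose, hne.choose_spec, rfl⟩
  have hSbdd : BddAbove S := ⟨n, by rintro m ⟨k, x, hx, rfl⟩; exact hbd k x⟩
  have hmem : sSup S ∈ S := Nat.sSup_mem hSne hSbdd
  obtain ⟨k₀, x₀, hx₀U, hx₀⟩ := hmem
  set s := sSup S with hs
  have hle : ∀ k, ∀ x ∈ U, f k x ≤ s := fun k x hx => le_csSup hSbdd ⟨k, x, hx, rfl⟩
  rcases Nat.eq_zero_or_pos s with h0 | hpos
  · refine ⟨U, le_refl U, hU, hne, fun k x hx y hy => ?_⟩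
    have := hle k x hx; have := hle k y hy; omega
  · have hlt : s - 1 < f k₀ x₀ := by omega
    obtain ⟨t, ht, htop, hx₀t⟩ := eventually_nhds_iff.mp (hlsc k₀ x₀ (s - 1) hlt)
    -- on W = t ∩ U, f k = s for all k ≥ k₀
    obtain ⟨V, hVW, hVop, hVne, hV⟩ :=
      aux_fin n f hlsc hbd k₀ (t ∩ U) (htop.inter hU) ⟨x₀, hx₀t, hx₀U⟩
    refine ⟨V, hVW.trans inter_subset_right, hVop, hVne, ?_⟩
    intro k x hx y hy
    rcases lt_or_ge k k₀ with h | h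
    · exact hV k h x hx y hy
    · have key : ∀ z ∈ V, f k z = s := by
        intro z hz
        obtain ⟨hzt, hzU⟩ := hVW hz
        have h1 := ht z hzt
        have h2 : f k₀ z ≤ f k z := hmono' z h
        have h3 := hle k z hzU
        omega
      rw [key x hx, key y hy]
end

section
/- Let 𝒟 ⊆ ℝ^n × ℝ^n be open and A : 𝒟 → ℝ smooth, with Hamiltonian vector field X_A = (∂_ξ A, −∂_x A), and let Φ : D_Φ → 𝒟 be a smooth local flow of X_A. Let U ⊆ ℝ^n be open and α : U → ℝ^n smooth with symmetric Jacobian at every point (i.e. ∂_{x_i} α_j = ∂_{x_j} α_i on U, so that α is a closed 1-form), with (x, α(x)) ∈ 𝒟 for all x ∈ U. Let ε > 0 be such that (−s, (x, α(x))) ∈ D_Φ for all |s| < ε and x ∈ U, and such that, writing ρ_s(x) = pr₁ Φ(−s, (x, α(x))), for every s ∈ (−ε,ε) the map ρ_s : U → ℝ^n is injective with invertible derivative at every point. Then the set Ũ = {(s, ρ_s(x)) : |s| < ε, x ∈ U} is open in ℝ × ℝ^n, and there is exactly one smooth map μ = (μ_ℝ, μ_M) : Ũ → ℝ × ℝ^n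 whose Jacobian (as a map into ℝ^{1+n}) is symmetric at every point of Ũ and which satisfies (y, μ_M(s,y)) ∈ 𝒟 and μ_ℝ(s,y) = A(y, μ_M(s,y)) for all (s,y) ∈ Ũ, and μ_M(0,x) = α(x) for all x ∈ U. Moreover, this μ satisfies μ(s, ρ_s(x)) = (A(x, α(x)), pr₂ Φ(−s, (x, α(x)))) for all s ∈ (−ε,ε) and x ∈ U. -/
open Real Set

set_option maxHeartbeats 1000000

noncomputable section

variable {n : ℕ}

abbrev Evec (n : ℕ) := Fin n → ℝ
abbrev Psp (n : ℕ) := (Fin n → ℝ) × (Fin n → ℝ)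
abbrev Qsp (n : ℕ) := ℝ × (Fin n → ℝ)

-- component fderiv lemmas
lemma fderiv_clm_comp' {X Y Z : Type*} [NormedAddCommGroup X] [NormedSpace ℝ X]
    [NormedAddCommGroup Y] [NormedSpace ℝ Y] [NormedAddCommGroup Z] [NormedSpace ℝ Z]
    (L : Y →L[ℝ] Z) {f : X → Y} {x : X} (hf : DifferentiableAt ℝ f x) (v : X) :
    fderiv ℝ (fun x => L (f x)) x v = L (fderiv ℝ f x v) := by
  have h := (L.hasFDerivAt.comp x hf.hasFDerivAt).fderiv
  calc fderiv ℝ (fun x => L (f x)) x v = fderiv ℝ (⇑L ∘ f) x v := rfl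
    _ = (L.comp (fderiv ℝ f x)) v := by rw [h]
    _ = L (fderiv ℝ f x v) := rfl

lemma fderiv_fst'' {X Y Z : Type*} [NormedAddCommGroup X] [NormedSpace ℝ X]
    [NormedAddCommGroup Y] [NormedSpace ℝ Y] [NormedAddCommGroup Z] [NormedSpace ℝ Z]
    {f : X → Y × Z} {x : X} (hf : DifferentiableAt ℝ f x) (v : X) :
    fderiv ℝ (fun x => (f x).1) x v = (fderiv ℝ f x v).1 :=
  fderiv_clm_comp' (ContinuousLinearMap.fst ℝ Y Z) hf v

lemma fderiv_snd'' {X Y Z : Type*} [NormedAddCommGroup X] [NormedSpace ℝ X]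
    [NormedAddCommGroup Y] [NormedSpace ℝ Y] [NormedAddCommGroup Z] [NormedSpace ℝ Z]
    {f : X → Y × Z} {x : X} (hf : DifferentiableAt ℝ f x) (v : X) :
    fderiv ℝ (fun x => (f x).2) x v = (fderiv ℝ f x v).2 :=
  fderiv_clm_comp' (ContinuousLinearMap.snd ℝ Y Z) hf v

lemma fderiv_pi_app {X : Type*} [NormedAddCommGroup X] [NormedSpace ℝ X]
    {f : X → Evec n} {x : X} (hf : DifferentiableAt ℝ f x) (i : Fin n) (v : X) :
    fderiv ℝ (fun x => f x i) x v = (fderiv ℝ f x v) i :=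
  fderiv_clm_comp' (ContinuousLinearMap.proj i) hf v

lemma fderiv_snd_app {X : Type*} [NormedAddCommGroup X] [NormedSpace ℝ X]
    {Y : Type*} [NormedAddCommGroup Y] [NormedSpace ℝ Y]
    {f : X → Y × Evec n} {x : X} (hf : DifferentiableAt ℝ f x) (i : Fin n) (v : X) :
    fderiv ℝ (fun x => (f x).2 i) x v = (fderiv ℝ f x v).2 i := by
  rw [fderiv_pi_app (by exact (differentiable_snd.differentiableAt).comp x hf) i v,
    fderiv_snd'' hf v]

-- decomposition lemmas
lemma pi_sum_single (v : Evec n) : ∑ i, v i • (Pi.single i 1 : Evec n) = v := by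
  ext j
  simp [Pi.single_apply, Finset.sum_apply]

lemma clmQ_expand {Y : Type*} [NormedAddCommGroup Y] [NormedSpace ℝ Y]
    (L : Qsp n →L[ℝ] Y) (u : Qsp n) :
    L u = u.1 • L (1, 0) + ∑ i, u.2 i • L (0, Pi.single i 1) := by
  have h1 : (∑ i, u.2 i • (((0:ℝ), Pi.single i 1) : Qsp n)) = ((0:ℝ), u.2) := by
    rw [Prod.ext_iff, Prod.fst_sum, Prod.snd_sum]
    constructor
    · simp
    · calc ∑ i, (u.2 i • (((0:ℝ), Pi.single i 1) : Qsp n)).2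
          = ∑ i, u.2 i • (Pi.single i 1 : Evec n) := by simp
        _ = u.2 := pi_sum_single u.2
  have h2 : u = u.1 • ((1:ℝ), (0:Evec n)) + ∑ i, u.2 i • (((0:ℝ), Pi.single i 1) : Qsp n) := by
    rw [h1, Prod.ext_iff]; constructor <;> simp
  conv_lhs => rw [h2]
  rw [map_add, map_smul, map_sum]
  simp only [map_smul]

lemma clmP_expand {Y : Type*} [NormedAddCommGroup Y] [NormedSpace ℝ Y]
    (L : Psp n →L[ℝ] Y) (u : Psp n) :
    L u = (∑ i, u.1 i • L (Pi.single i 1, 0)) + ∑ i, u.2 i • L (0, Pi.single i 1) := by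
  have e1 : (∑ i, u.1 i • ((Pi.single i 1, 0) : Psp n)) = ((u.1, 0) : Psp n) := by
    rw [Prod.ext_iff, Prod.fst_sum, Prod.snd_sum]
    constructor
    · calc ∑ i, (u.1 i • ((Pi.single i 1, 0) : Psp n)).1
          = ∑ i, u.1 i • (Pi.single i 1 : Evec n) := by simp
        _ = u.1 := pi_sum_single u.1
    · simp
  have e2 : (∑ i, u.2 i • (((0:Evec n), Pi.single i 1) : Psp n)) = (((0:Evec n), u.2) : Psp n) := by
    rw [Prod.ext_iff, Prod.fst_sum, Prod.snd_sum]
    constructor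
    · simp
    · calc ∑ i, (u.2 i • (((0:Evec n), Pi.single i 1) : Psp n)).2
          = ∑ i, u.2 i • (Pi.single i 1 : Evec n) := by simp
        _ = u.2 := pi_sum_single u.2
  have h2 : u = (∑ i, u.1 i • ((Pi.single i 1, 0) : Psp n))
      + ∑ i, u.2 i • (((0:Evec n), Pi.single i 1) : Psp n) := by
    rw [e1, e2, Prod.ext_iff]; constructor <;> simp
  conv_lhs => rw [h2]
  rw [map_add, map_sum, map_sum]
  simp only [map_smul]

/-- dot product on `ℝ × ℝⁿ`. -/
def dotQ (u v : Qsp n) : ℝ := u.1 * v.1 + ∑ i, u.2 i * v.2 i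

lemma dotQ_es (u : Qsp n) : dotQ u ((1:ℝ), (0:Evec n)) = u.1 := by simp [dotQ]

lemma dotQ_ei (u : Qsp n) (i : Fin n) : dotQ u ((0:ℝ), (Pi.single i 1 : Evec n)) = u.2 i := by
  simp [dotQ, Pi.single_apply, mul_ite]

lemma dotQ_smul_left (c : ℝ) (u v : Qsp n) : dotQ (c • u) v = c * dotQ u v := by
  simp only [dotQ, Prod.smul_fst, Prod.smul_snd, Pi.smul_apply, smul_eq_mul, mul_add,
    Finset.mul_sum]
  congr 1
  · ring
  · exact Finset.sum_congr rfl fun i _ => by ring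

lemma dotQ_smul_right (c : ℝ) (u v : Qsp n) : dotQ u (c • v) = c * dotQ u v := by
  simp only [dotQ, Prod.smul_fst, Prod.smul_snd, Pi.smul_apply, smul_eq_mul, mul_add,
    Finset.mul_sum]
  congr 1
  · ring
  · exact Finset.sum_congr rfl fun i _ => by ring

lemma dotQ_add_left (u u' v : Qsp n) : dotQ (u + u') v = dotQ u v + dotQ u' v := by
  simp only [dotQ, Prod.fst_add, Prod.snd_add, Pi.add_apply, add_mul, Finset.sum_add_distrib]
  ring

lemma dotQ_add_right (u v v' : Qsp n) : dotQ u (v + v') = dotQ u v + dotQ u v' := by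
  simp only [dotQ, Prod.fst_add, Prod.snd_add, Pi.add_apply, mul_add, Finset.sum_add_distrib]
  ring

lemma dotQ_sum_left {ι : Type*} (s : Finset ι) (f : ι → Qsp n) (v : Qsp n) :
    dotQ (∑ i ∈ s, f i) v = ∑ i ∈ s, dotQ (f i) v := by
  classical
  induction s using Finset.induction with
  | empty => simp [dotQ]
  | insert _ _ h ih => rw [Finset.sum_insert h, Finset.sum_insert h, dotQ_add_left, ih]

lemma dotQ_sum_right {ι : Type*} (s : Finset ι) (f : ι → Qsp n) (v : Qsp n) :
    dotQ v (∑ i ∈ s, f i) = ∑ i ∈ s, dotQ v (f i) := by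
  classical
  induction s using Finset.induction with
  | empty => simp [dotQ]
  | insert _ _ h ih => rw [Finset.sum_insert h, Finset.sum_insert h, dotQ_add_right, ih]

/-- A bilinear-in-two-CLMs form which is symmetric on basis vectors is symmetric. -/
lemma dotQ_symm_ext (S T : Qsp n →L[ℝ] Qsp n)
    (h0i : ∀ i : Fin n, dotQ (S (1, 0)) (T (0, Pi.single i 1))
      = dotQ (S (0, Pi.single i 1)) (T (1, 0)))
    (hij : ∀ i j : Fin n, dotQ (S (0, Pi.single i 1)) (T (0, Pi.single j 1))
      = dotQ (S (0, Pi.single j 1)) (T (0, Pi.single i 1))) :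
    ∀ u v : Qsp n, dotQ (S u) (T v) = dotQ (S v) (T u) := by
  set A0 := dotQ (S ((1:ℝ), (0:Evec n))) (T ((1:ℝ), (0:Evec n))) with hA0
  set f : Fin n → ℝ := fun j => dotQ (S ((1:ℝ), (0:Evec n))) (T (0, Pi.single j 1)) with hf
  set h : Fin n → Fin n → ℝ :=
    fun i j => dotQ (S (0, Pi.single i 1)) (T (0, Pi.single j 1)) with hh
  have key : ∀ (u v : Qsp n), dotQ (S u) (T v)
      = u.1 * v.1 * A0 + (∑ j, u.1 * v.2 j * f j) + (∑ i, u.2 i * v.1 * f i)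
        + ∑ i, ∑ j, u.2 i * v.2 j * h i j := by
    intro u v
    rw [clmQ_expand S u, clmQ_expand T v]
    rw [dotQ_add_left, dotQ_add_right, dotQ_add_right, dotQ_smul_left, dotQ_smul_right,
      dotQ_sum_right, dotQ_sum_left, dotQ_sum_left]
    have e2 : ∑ j, dotQ (u.1 • S (1,0)) (v.2 j • T (0, Pi.single j 1))
        = ∑ j, u.1 * v.2 j * f j := by
      refine Finset.sum_congr rfl fun j _ => ?_
      rw [dotQ_smul_left, dotQ_smul_right, hf]; ring
    have e3 : ∑ i, dotQ (u.2 i • S (0, Pi.single i 1)) (v.1 • T (1,0))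
        = ∑ i, u.2 i * v.1 * f i := by
      refine Finset.sum_congr rfl fun i _ => ?_
      rw [dotQ_smul_left, dotQ_smul_right, ← h0i]; rw [hf]; ring
    have e4 : ∑ i, dotQ (u.2 i • S (0, Pi.single i 1)) (∑ j, v.2 j • T (0, Pi.single j 1))
        = ∑ i, ∑ j, u.2 i * v.2 j * h i j := by
      refine Finset.sum_congr rfl fun i _ => ?_
      rw [dotQ_sum_right]
      refine Finset.sum_congr rfl fun j _ => ?_
      rw [dotQ_smul_left, dotQ_smul_right, hh]; ring
    rw [e2, e3, e4, hA0]
    ring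
  intro u v
  rw [key u v, key v u]
  have hdd : ∑ i, ∑ j, u.2 i * v.2 j * h i j = ∑ i, ∑ j, v.2 i * u.2 j * h i j :=
    calc ∑ i, ∑ j, u.2 i * v.2 j * h i j
        = ∑ i, ∑ j, v.2 j * u.2 i * h j i :=
          Finset.sum_congr rfl fun i _ => Finset.sum_congr rfl fun j _ => by
            simp only [hh]; rw [hij i j]; ring
      _ = ∑ j, ∑ i, v.2 j * u.2 i * h j i := Finset.sum_comm
      _ = ∑ i, ∑ j, v.2 i * u.2 j * h i j := rfl
  rw [hdd]
  have h2 : ∑ j, u.1 * v.2 j * f j = ∑ i, v.2 i * u.1 * f i :=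
    Finset.sum_congr rfl fun i _ => by ring
  have h3 : ∑ i, u.2 i * v.1 * f i = ∑ j, v.1 * u.2 j * f j :=
    Finset.sum_congr rfl fun i _ => by ring
  rw [h2, h3]
  ring

/-- constancy from zero derivative on an open interval -/
lemma const_of_deriv_zero_Ioo {f : ℝ → ℝ} {a b : ℝ}
    (h : ∀ t ∈ Ioo a b, HasDerivAt f 0 t) {s t : ℝ}
    (hs : s ∈ Ioo a b) (ht : t ∈ Ioo a b) : f s = f t := by
  have hd : DifferentiableOn ℝ f (Ioo a b) :=
    fun z hz => ((h z hz).differentiableAt).differentiableWithinAt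
  refine (convex_Ioo a b).is_const_of_fderivWithin_eq_zero hd (fun z hz => ?_) hs ht
  rw [fderivWithin_eq_fderiv (isOpen_Ioo.uniqueDiffOn z hz) (h z hz).differentiableAt,
    (h z hz).hasFDerivAt.fderiv]
  ext
  simp

lemma hasDerivAt_clm_comp {Y Z : Type*} [NormedAddCommGroup Y] [NormedSpace ℝ Y]
    [NormedAddCommGroup Z] [NormedSpace ℝ Z] (L : Y →L[ℝ] Z) {f : ℝ → Y} {d : Y} {t : ℝ}
    (hf : HasDerivAt f d t) : HasDerivAt (fun t => L (f t)) (L d) t :=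
  L.hasFDerivAt.comp_hasDerivAt t hf




lemma clmP_sndpart {n : ℕ} {Y : Type*} [NormedAddCommGroup Y] [NormedSpace ℝ Y]
    (L : Psp n →L[ℝ] Y) (w : Evec n) :
    L ((0:Evec n), w) = ∑ k, w k • L (0, Pi.single k 1) := by
  rw [clmP_expand]
  simp

lemma clmQ_sndpart {n : ℕ} {Y : Type*} [NormedAddCommGroup Y] [NormedSpace ℝ Y]
    (L : Qsp n →L[ℝ] Y) (w : Evec n) :
    L ((0:ℝ), w) = ∑ k, w k • L (0, Pi.single k 1) := by
  rw [clmQ_expand]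
  simp

lemma ham_orth {n : ℕ} (L : Psp n →L[ℝ] ℝ) :
    L ((fun i => L ((0:Evec n), Pi.single i 1)), (fun i => -L ((Pi.single i 1 : Evec n), 0))) = 0 := by
  rw [clmP_expand]
  simp only [smul_eq_mul]
  rw [← Finset.sum_add_distrib]
  apply Finset.sum_eq_zero
  intro i _
  ring

/-- The Hamiltonian vector field `X_F(x,ξ) = (∂_ξ F(x,ξ), −∂_x F(x,ξ))` of a function
`F` on `ℝ^n × ℝ^n`. -/
def hamVF {n : ℕ} (F : (Fin n → ℝ) × (Fin n → ℝ) → ℝ)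
    (p : (Fin n → ℝ) × (Fin n → ℝ)) : (Fin n → ℝ) × (Fin n → ℝ) :=
  (fun i => fderiv ℝ F p ((0 : Fin n → ℝ), Pi.single i 1),
   fun i => -fderiv ℝ F p (Pi.single i 1, (0 : Fin n → ℝ)))

/-- A map `μ : ℝ × ℝ^n → ℝ × ℝ^n` (the coefficients of a 1-form on an open subset of
`ℝ^{1+n}`) has symmetric Jacobian at a point `p`. -/
def SymmJacAt {n : ℕ} (μ : ℝ × (Fin n → ℝ) → ℝ × (Fin n → ℝ)) (p : ℝ × (Fin n → ℝ)) : Prop :=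
  (∀ i : Fin n,
    fderiv ℝ (fun q => (μ q).1) p ((0 : ℝ), Pi.single i 1) =
      fderiv ℝ (fun q => (μ q).2 i) p ((1 : ℝ), (0 : Fin n → ℝ))) ∧
  ∀ i j : Fin n,
    fderiv ℝ (fun q => (μ q).2 j) p ((0 : ℝ), Pi.single i 1) =
      fderiv ℝ (fun q => (μ q).2 i) p ((0 : ℝ), Pi.single j 1)

/-- The set `Ut = {(s, ρ_s(x)) : |s| < ε, x ∈ U}`, where `ρ_s(x) = pr₁ Φ(−s,(x,α(x)))`. -/
def tildeU {n : ℕ} (Φ : ℝ → (Fin n → ℝ) × (Fin n → ℝ) → (Fin n → ℝ) × (Fin n → ℝ))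
    (α : (Fin n → ℝ) → (Fin n → ℝ)) (U : Set (Fin n → ℝ)) (ε : ℝ) :
    Set (ℝ × (Fin n → ℝ)) :=
  {p | ∃ s x, |s| < ε ∧ x ∈ U ∧ p = (s, (Φ (-s) (x, α x)).1)}

/-- `μ` is a closed 1-form on `Ut` solving the generalized eikonal equation
`μ_ℝ = A(μ_M)` with initial datum `α` on `U`. -/
def IsEikonalSol {n : ℕ} (𝒟 : Set ((Fin n → ℝ) × (Fin n → ℝ)))
    (A : (Fin n → ℝ) × (Fin n → ℝ) → ℝ)
    (α : (Fin n → ℝ) → (Fin n → ℝ)) (U : Set (Fin n → ℝ))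
    (Ut : Set (ℝ × (Fin n → ℝ))) (μ : ℝ × (Fin n → ℝ) → ℝ × (Fin n → ℝ)) : Prop :=
  ContDiffOn ℝ (⊤ : ℕ∞) μ Ut ∧
  (∀ p ∈ Ut, SymmJacAt μ p ∧ (p.2, (μ p).2) ∈ 𝒟 ∧ (μ p).1 = A (p.2, (μ p).2)) ∧
  ∀ x ∈ U, (μ (0, x)).2 = α x

theorem stmt11 {n : ℕ}
    (𝒟 : Set ((Fin n → ℝ) × (Fin n → ℝ))) (h𝒟 : IsOpen 𝒟)
    (A : (Fin n → ℝ) × (Fin n → ℝ) → ℝ) (hA : ContDiffOn ℝ (⊤ : ℕ∞) A 𝒟)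
    (DΦ : Set (ℝ × ((Fin n → ℝ) × (Fin n → ℝ)))) (hDΦopen : IsOpen DΦ)
    (hDΦsub : ∀ q ∈ DΦ, q.2 ∈ 𝒟)
    (hDΦ0 : ∀ p ∈ 𝒟, ((0 : ℝ), p) ∈ DΦ)
    (Φ : ℝ → (Fin n → ℝ) × (Fin n → ℝ) → (Fin n → ℝ) × (Fin n → ℝ))
    (hΦmaps : ∀ q ∈ DΦ, Φ q.1 q.2 ∈ 𝒟)
    (hΦsmooth : ContDiffOn ℝ (⊤ : ℕ∞) (fun q : ℝ × ((Fin n → ℝ) × (Fin n → ℝ)) => Φ q.1 q.2) DΦ)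
    (hΦ0 : ∀ p ∈ 𝒟, Φ 0 p = p)
    (hΦderiv : ∀ q ∈ DΦ, HasDerivAt (fun τ => Φ τ q.2) (hamVF A (Φ q.1 q.2)) q.1)
    (U : Set (Fin n → ℝ)) (hU : IsOpen U)
    (α : (Fin n → ℝ) → (Fin n → ℝ)) (hα : ContDiffOn ℝ (⊤ : ℕ∞) α U)
    (hαsymm : ∀ x ∈ U, ∀ i j : Fin n,
      fderiv ℝ (fun z => α z j) x (Pi.single i 1) =
        fderiv ℝ (fun z => α z i) x (Pi.single j 1))
    (hα𝒟 : ∀ x ∈ U, (x, α x) ∈ 𝒟)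
    (ε : ℝ) (hε : 0 < ε)
    (hdom : ∀ s : ℝ, |s| < ε → ∀ x ∈ U, (-s, (x, α x)) ∈ DΦ)
    (hinj : ∀ s : ℝ, |s| < ε → Set.InjOn (fun x => (Φ (-s) (x, α x)).1) U)
    (hder : ∀ s : ℝ, |s| < ε → ∀ x ∈ U,
      Function.Bijective (fderiv ℝ (fun z => (Φ (-s) (z, α z)).1) x)) :
    IsOpen (tildeU Φ α U ε) ∧
    ∃ μ : ℝ × (Fin n → ℝ) → ℝ × (Fin n → ℝ),
      IsEikonalSol 𝒟 A α U (tildeU Φ α U ε) μ ∧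
      (∀ μ' : ℝ × (Fin n → ℝ) → ℝ × (Fin n → ℝ),
        IsEikonalSol 𝒟 A α U (tildeU Φ α U ε) μ' → Set.EqOn μ' μ (tildeU Φ α U ε)) ∧
      ∀ s : ℝ, |s| < ε → ∀ x ∈ U,
        μ (s, (Φ (-s) (x, α x)).1) = (A (x, α x), (Φ (-s) (x, α x)).2) := by
  classical
  set V : Set (Qsp n) := Ioo (-ε) ε ×ˢ U with hVdef
  have hVopen : IsOpen V := isOpen_Ioo.prod hU
  set F : Qsp n → Psp n := fun q => Φ (-q.1) (q.2, α q.2) with hFdef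
  set G : Qsp n → Qsp n := fun q => (q.1, (F q).1) with hGdef
  have hVmem : ∀ q : Qsp n, q ∈ V ↔ (|q.1| < ε ∧ q.2 ∈ U) := by
    intro q
    rw [hVdef, Set.mem_prod, Set.mem_Ioo, ← abs_lt]
  have htU : tildeU Φ α U ε = G '' V := by
    ext p
    constructor
    · rintro ⟨s, x, hs, hx, rfl⟩
      exact ⟨(s, x), (hVmem (s,x)).2 ⟨hs, hx⟩, rfl⟩
    · rintro ⟨q, hq, rfl⟩
      obtain ⟨h1, h2⟩ := (hVmem q).1 hq
      exact ⟨q.1, q.2, h1, h2, rfl⟩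
  have hψDΦ : ∀ q ∈ V, ((-q.1 : ℝ), (q.2, α q.2)) ∈ DΦ := by
    intro q hq
    obtain ⟨h1, h2⟩ := (hVmem q).1 hq
    exact hdom q.1 h1 q.2 h2
  have hFmem : ∀ q ∈ V, F q ∈ 𝒟 := fun q hq => hΦmaps _ (hψDΦ q hq)
  have hFsmooth : ContDiffOn ℝ (⊤ : ℕ∞) F V := by
    have hψ : ContDiffOn ℝ (⊤ : ℕ∞) (fun q : Qsp n => ((-q.1 : ℝ), (q.2, α q.2))) V :=
      (contDiff_fst.contDiffOn.neg).prodMk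
        ((contDiff_snd.contDiffOn).prodMk
          (hα.comp contDiff_snd.contDiffOn (fun q hq => ((hVmem q).1 hq).2)))
    exact hΦsmooth.comp hψ hψDΦ
  have hFca : ∀ q ∈ V, ContDiffAt ℝ (⊤ : ℕ∞) F q := fun q hq => hFsmooth.contDiffAt (hVopen.mem_nhds hq)
  have hFdiff : ∀ q ∈ V, DifferentiableAt ℝ F q :=
    fun q hq => (hFca q hq).differentiableAt (by simp)
  -- the s-derivative of the flow
  have hFd : ∀ q ∈ V, HasDerivAt (fun s => F (s, q.2)) (-hamVF A (F q)) q.1 := by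
    intro q hq
    have hq' := hΦderiv (-q.1, (q.2, α q.2)) (hψDΦ q hq)
    have h4 := hq'.scomp q.1 (hasDerivAt_neg q.1)
    rw [neg_one_smul] at h4
    exact h4
  set fstP : Psp n →L[ℝ] Evec n := ContinuousLinearMap.fst ℝ (Evec n) (Evec n) with hfstP
  set sndP : Psp n →L[ℝ] Evec n := ContinuousLinearMap.snd ℝ (Evec n) (Evec n) with hsndP
  set inrQ : Evec n →L[ℝ] Qsp n := ContinuousLinearMap.inr ℝ ℝ (Evec n) with hinrQ
  have hDFes : ∀ q ∈ V, fderiv ℝ F q ((1:ℝ), (0:Evec n)) = -hamVF A (F q) := by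
    intro q hq
    have hcurve : HasDerivAt (fun s : ℝ => ((s : ℝ), q.2)) (((1:ℝ), (0:Evec n)) : Qsp n) q.1 :=
      (hasDerivAt_id q.1).prodMk (hasDerivAt_const q.1 q.2)
    have hl : HasFDerivAt F (fderiv ℝ F q) (q.1, q.2) := by
      rw [Prod.mk.eta]; exact (hFdiff q hq).hasFDerivAt
    have h2 : HasDerivAt (fun s : ℝ => F (s, q.2)) (fderiv ℝ F q ((1:ℝ),(0:Evec n))) q.1 :=
      hl.comp_hasDerivAt (f := fun s : ℝ => ((s : ℝ), q.2)) q.1 hcurve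
    exact h2.unique (hFd q hq)
  have hDFx : ∀ q ∈ V, HasFDerivAt (fun z => F (q.1, z)) ((fderiv ℝ F q).comp inrQ) q.2 := by
    intro q hq
    have hl : HasFDerivAt F (fderiv ℝ F q) (q.1, q.2) := by
      rw [Prod.mk.eta]; exact (hFdiff q hq).hasFDerivAt
    have hcurve : HasFDerivAt (fun z : Evec n => ((q.1 : ℝ), z)) inrQ q.2 := by
      have h0 : HasFDerivAt (fun z : Evec n => ((q.1 : ℝ), z))
          (((0 : Evec n →L[ℝ] ℝ)).prod (ContinuousLinearMap.id ℝ (Evec n))) q.2 :=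
        (hasFDerivAt_const (q.1 : ℝ) q.2).prodMk (hasFDerivAt_id q.2)
      convert h0 using 1
      exact rfl
    exact hl.comp q.2 hcurve
  have hDx : ∀ q ∈ V, HasFDerivAt (fun z => (F (q.1, z)).1)
      (fstP.comp ((fderiv ℝ F q).comp inrQ)) q.2 :=
    fun q hq => (fstP.hasFDerivAt).comp q.2 (hDFx q hq)
  have hDxbij : ∀ q ∈ V, Function.Bijective (fstP.comp ((fderiv ℝ F q).comp inrQ)) := by
    intro q hq
    obtain ⟨h1, h2⟩ := (hVmem q).1 hq
    have hb := hder q.1 h1 q.2 h2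
    have he : fderiv ℝ (fun z => (Φ (-q.1) (z, α z)).1) q.2
        = fstP.comp ((fderiv ℝ F q).comp inrQ) := by
      have h3 : (fun z => (Φ (-q.1) (z, α z)).1) = (fun z => (F (q.1, z)).1) := rfl
      rw [h3, (hDx q hq).fderiv]
    rwa [he] at hb
  have hGfd : ∀ q ∈ V, HasFDerivAt G ((ContinuousLinearMap.fst ℝ ℝ (Evec n)).prod
      (fstP.comp (fderiv ℝ F q))) q := by
    intro q hq
    exact (hasFDerivAt_fst).prodMk ((fstP.hasFDerivAt).comp q (hFdiff q hq).hasFDerivAt)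
  have hGdiff : ∀ q ∈ V, DifferentiableAt ℝ G q := fun q hq => (hGfd q hq).differentiableAt
  have hDGapp : ∀ q ∈ V, ∀ v : Qsp n, fderiv ℝ G q v = (v.1, fstP (fderiv ℝ F q v)) := by
    intro q hq v
    rw [(hGfd q hq).fderiv]
    rfl
  have hDGbij : ∀ q ∈ V, Function.Bijective (fderiv ℝ G q) := by
    intro q hq
    constructor
    · intro v v' hvv
      rw [hDGapp q hq v, hDGapp q hq v', Prod.ext_iff] at hvv
      obtain ⟨ha, hb⟩ := hvv
      simp only at ha hb
      have hv : inrQ (v.2 - v'.2) = v - v' := by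
        rw [Prod.ext_iff]
        constructor
        · simp [hinrQ, ha]
        · simp [hinrQ]
      have h5 : (fstP.comp ((fderiv ℝ F q).comp inrQ)) (v.2 - v'.2) = 0 := by
        rw [ContinuousLinearMap.comp_apply, ContinuousLinearMap.comp_apply, hv, map_sub,
          map_sub, hb, sub_self]
      have h6 : v.2 - v'.2 = 0 := by
        apply (hDxbij q hq).1
        rw [h5, map_zero]
      have h7 : v.2 = v'.2 := sub_eq_zero.mp h6
      exact Prod.ext ha h7
    · intro y
      obtain ⟨u, hu⟩ := (hDxbij q hq).2 (y.2 - fstP (fderiv ℝ F q (y.1, 0)))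
      refine ⟨(y.1, u), ?_⟩
      rw [hDGapp q hq (y.1, u), Prod.ext_iff]
      refine ⟨rfl, ?_⟩
      have hsplit : ((y.1, u) : Qsp n) = ((y.1, (0:Evec n)) : Qsp n) + inrQ u := by
        rw [Prod.ext_iff]
        constructor
        · simp [hinrQ]
        · simp [hinrQ]
      simp only [ContinuousLinearMap.comp_apply] at hu
      show fstP (fderiv ℝ F q (y.1, u)) = y.2
      rw [hsplit, map_add, map_add, hu]
      abel
  have hGcda : ∀ q ∈ V, ContDiffAt ℝ (⊤ : ℕ∞) G q := by
    intro q hq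
    refine (ContDiffOn.prodMk (contDiff_fst.contDiffOn)
      ((fstP.contDiff.comp_contDiffOn hFsmooth))).contDiffAt (hVopen.mem_nhds hq)
  have hinjG : Set.InjOn G V := by
    intro q hq q' hq' hGqq
    rw [Prod.ext_iff] at hGqq
    obtain ⟨ha, hb⟩ := hGqq
    obtain ⟨h1, h2⟩ := (hVmem q).1 hq
    obtain ⟨h1', h2'⟩ := (hVmem q').1 hq'
    have hx : q.2 = q'.2 := by
      refine hinj q.1 h1 h2 h2' ?_
      have ha' : q.1 = q'.1 := ha
      have hb' : (F q).1 = (F q').1 := hb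
      show (F q).1 = (F (q.1, q'.2)).1
      rw [hb', ha', Prod.mk.eta]
    exact Prod.ext ha hx
  -- the local inverse map
  set H : Qsp n → Qsp n := Function.invFunOn G V with hHdef
  have hH1 : ∀ p ∈ G '' V, H p ∈ V ∧ G (H p) = p := by
    rintro p ⟨q, hq, rfl⟩
    exact ⟨Function.invFunOn_mem ⟨q, hq, rfl⟩, Function.invFunOn_eq ⟨q, hq, rfl⟩⟩
  have hHG : ∀ q ∈ V, H (G q) = q := by
    intro q hq
    exact hinjG (hH1 _ ⟨q, hq, rfl⟩).1 hq (hH1 _ ⟨q, hq, rfl⟩).2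
  -- openness
  have hOpen' : IsOpen (G '' V) := by
    rw [isOpen_iff_mem_nhds]
    rintro p ⟨q, hq, rfl⟩
    obtain ⟨e, he⟩ : ∃ e : Qsp n ≃L[ℝ] Qsp n, (e : Qsp n →L[ℝ] Qsp n) = fderiv ℝ G q :=
      ⟨LinearEquiv.toContinuousLinearEquiv
        (LinearEquiv.ofBijective ((fderiv ℝ G q) : Qsp n →ₗ[ℝ] Qsp n) (hDGbij q hq)),
        rfl⟩
    have hfd : HasFDerivAt G (e : Qsp n →L[ℝ] Qsp n) q := by
      rw [he]; exact (hGdiff q hq).hasFDerivAt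
    have hstrict := (hGcda q hq).hasStrictFDerivAt' hfd (by simp)
    have h1 := hstrict.eventually_right_inverse
    have h2 : ContinuousAt (hstrict.localInverse G e q) (G q) :=
      hstrict.localInverse_continuousAt
    have h3 : ∀ᶠ y in nhds (G q), (hstrict.localInverse G e q) y ∈ V := by
      have h4 : (hstrict.localInverse G e q) (G q) = q := hstrict.localInverse_apply_image
      have := h2.preimage_mem_nhds (hVopen.mem_nhds (by rw [h4]; exact hq))
      exact this
    filter_upwards [h1, h3] with y hy1 hy3
    exact ⟨_, hy3, hy1⟩
  have hOpen : IsOpen (tildeU Φ α U ε) := by rw [htU]; exact hOpen'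
  -- smoothness of the inverse
  have hHsm : ∀ p ∈ G '' V, ContDiffAt ℝ (⊤ : ℕ∞) H p := by
    rintro p ⟨q, hq, rfl⟩
    obtain ⟨e, he⟩ : ∃ e : Qsp n ≃L[ℝ] Qsp n, (e : Qsp n →L[ℝ] Qsp n) = fderiv ℝ G q :=
      ⟨LinearEquiv.toContinuousLinearEquiv
        (LinearEquiv.ofBijective ((fderiv ℝ G q) : Qsp n →ₗ[ℝ] Qsp n) (hDGbij q hq)),
        rfl⟩
    have hfd : HasFDerivAt G (e : Qsp n →L[ℝ] Qsp n) q := by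
      rw [he]; exact (hGdiff q hq).hasFDerivAt
    have hsm := (hGcda q hq).to_localInverse hfd (by simp)
    have hstrict := (hGcda q hq).hasStrictFDerivAt' hfd (by simp)
    have hdefeq : (hGcda q hq).localInverse hfd (by simp) = hstrict.localInverse G e q := rfl
    refine hsm.congr_of_eventuallyEq ?_
    have h1 := hstrict.eventually_right_inverse
    have h2 : ContinuousAt (hstrict.localInverse G e q) (G q) :=
      hstrict.localInverse_continuousAt
    have h3 : ∀ᶠ y in nhds (G q), (hstrict.localInverse G e q) y ∈ V := by
      have h4 : (hstrict.localInverse G e q) (G q) = q := hstrict.localInverse_apply_image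
      exact h2.preimage_mem_nhds (hVopen.mem_nhds (by rw [h4]; exact hq))
    filter_upwards [h1, h3, hOpen'.mem_nhds ⟨q, hq, rfl⟩] with y hy1 hy3 hy4
    rw [hdefeq]
    refine hinjG (hH1 y hy4).1 hy3 ?_
    rw [(hH1 y hy4).2, hy1]
  -- the solution
  set ν : Qsp n → Qsp n := fun q => (A (F q), (F q).2) with hνdef
  set μ : Qsp n → Qsp n := ν ∘ H with hμdef
  have hνsm : ContDiffOn ℝ (⊤ : ℕ∞) ν V :=
    ContDiffOn.prodMk (hA.comp hFsmooth hFmem) (sndP.contDiff.comp_contDiffOn hFsmooth)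
  have hμsm : ContDiffOn ℝ (⊤ : ℕ∞) μ (tildeU Φ α U ε) := by
    rw [htU]
    intro p hp
    exact (((hνsm.contDiffAt (hVopen.mem_nhds (hH1 p hp).1)).comp p
      (hHsm p hp))).contDiffWithinAt
  have hμG : ∀ q ∈ V, μ (G q) = ν q := by
    intro q hq
    show ν (H (G q)) = ν q
    rw [hHG q hq]
  -- invariance of A along the flow
  have hAinv : ∀ q ∈ V, A (F q) = A (q.2, α q.2) := by
    intro q hq
    obtain ⟨h1, h2⟩ := (hVmem q).1 hq
    have hg : ∀ t ∈ Ioo (-ε) ε, HasDerivAt (fun τ => A (Φ τ (q.2, α q.2))) 0 t := by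
      intro t ht
      have habs : |(-t : ℝ)| < ε := by
        rw [abs_neg, abs_lt]
        exact ⟨ht.1, ht.2⟩
      have htd : ((t : ℝ), (q.2, α q.2)) ∈ DΦ := by
        have := hdom (-t) habs q.2 h2
        rwa [neg_neg] at this
      have hd1 := hΦderiv ((t : ℝ), (q.2, α q.2)) htd
      have hAd : DifferentiableAt ℝ A (Φ t (q.2, α q.2)) :=
        ((hA.contDiffAt (h𝒟.mem_nhds (hΦmaps _ htd))).differentiableAt (by simp))
      have hd2 := hAd.hasFDerivAt.comp_hasDerivAt t hd1
      have h0 : fderiv ℝ A (Φ t (q.2, α q.2)) (hamVF A (Φ t (q.2, α q.2))) = 0 :=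
        ham_orth _
      rwa [h0] at hd2
    have hmem1 : -q.1 ∈ Ioo (-ε) ε := by
      rw [abs_lt] at h1
      constructor <;> [linarith [h1.2]; linarith [h1.1]]
    have hmem2 : (0:ℝ) ∈ Ioo (-ε) ε := by
      constructor <;> [linarith; linarith]
    have hcon := const_of_deriv_zero_Ioo hg hmem1 hmem2
    show A (Φ (-q.1) (q.2, α q.2)) = A (q.2, α q.2)
    rw [hcon, hΦ0 _ (hα𝒟 q.2 h2)]
  -- second-derivative machinery
  have hDFsm : ContDiffOn ℝ (⊤ : ℕ∞) (fderiv ℝ F) V := hFsmooth.fderiv_of_isOpen hVopen (by simp)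
  have hDFdiff : ∀ q ∈ V, DifferentiableAt ℝ (fderiv ℝ F) q :=
    fun q hq => ((hDFsm.contDiffAt (hVopen.mem_nhds hq)).differentiableAt (by simp))
  have h2symm : ∀ q ∈ V, ∀ v w : Qsp n,
      fderiv ℝ (fderiv ℝ F) q v w = fderiv ℝ (fderiv ℝ F) q w v := by
    intro q hq v w
    refine second_derivative_symmetric_of_eventually (f := F) ?_ (hDFdiff q hq).hasFDerivAt v w
    filter_upwards [hVopen.mem_nhds hq] with y hy
    exact (hFdiff y hy).hasFDerivAt
  have hfAsm : ContDiffOn ℝ (⊤ : ℕ∞) (fderiv ℝ A) 𝒟 := hA.fderiv_of_isOpen h𝒟 (by simp)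
  have hfAdiff : ∀ p ∈ 𝒟, DifferentiableAt ℝ (fderiv ℝ A) p :=
    fun p hp => ((hfAsm.contDiffAt (h𝒟.mem_nhds hp)).differentiableAt (by simp))
  have hAdiff : ∀ p ∈ 𝒟, DifferentiableAt ℝ A p :=
    fun p hp => ((hA.contDiffAt (h𝒟.mem_nhds hp)).differentiableAt (by simp))
  have hAsymm : ∀ p ∈ 𝒟, ∀ v w : Psp n,
      fderiv ℝ (fderiv ℝ A) p v w = fderiv ℝ (fderiv ℝ A) p w v := by
    intro p hp v w
    refine second_derivative_symmetric_of_eventually (f := A) ?_ (hfAdiff p hp).hasFDerivAt v w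
    filter_upwards [h𝒟.mem_nhds hp] with y hy
    exact (hAdiff y hy).hasFDerivAt
  -- the Hamiltonian vector field as a continuous linear map of the differential
  set φH : (Psp n →L[ℝ] ℝ) →L[ℝ] Psp n :=
    (ContinuousLinearMap.pi fun i =>
      ContinuousLinearMap.apply ℝ ℝ ((0 : Evec n), Pi.single i 1)).prod
    (- ContinuousLinearMap.pi fun i =>
      ContinuousLinearMap.apply ℝ ℝ ((Pi.single i 1 : Evec n), 0)) with hφHdef
  have hham : ∀ p : Psp n, hamVF A p = φH (fderiv ℝ A p) := fun p => rfl
  have hφH1 : ∀ L' : Psp n →L[ℝ] ℝ, ∀ k : Fin n,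
      (φH L').1 k = L' ((0:Evec n), Pi.single k 1) := fun L' k => rfl
  have hφH2 : ∀ L' : Psp n →L[ℝ] ℝ, ∀ k : Fin n,
      (φH L').2 k = -L' ((Pi.single k 1 : Evec n), (0:Evec n)) := fun L' k => rfl
  have hhamd : ∀ p ∈ 𝒟, HasFDerivAt (hamVF A) (φH.comp (fderiv ℝ (fderiv ℝ A) p)) p := by
    intro p hp
    have h0 := φH.hasFDerivAt.comp p (hfAdiff p hp).hasFDerivAt
    refine h0.congr_of_eventuallyEq ?_
    exact Filter.Eventually.of_forall (fun y => hham y)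
  -- key second-derivative identity
  have hkey : ∀ q ∈ V, ∀ u : Qsp n,
      fderiv ℝ (fderiv ℝ F) q u ((1:ℝ), (0:Evec n))
        = -(φH ((fderiv ℝ (fderiv ℝ A) (F q)) (fderiv ℝ F q u))) := by
    intro q hq u
    have hev : (fun q' => fderiv ℝ F q' ((1:ℝ), (0:Evec n)))
        =ᶠ[nhds q] (fun q' => -(hamVF A (F q'))) := by
      filter_upwards [hVopen.mem_nhds hq] with y hy
      exact hDFes y hy
    have hL : fderiv ℝ (fun q' => fderiv ℝ F q' ((1:ℝ), (0:Evec n))) q u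
        = fderiv ℝ (fderiv ℝ F) q u ((1:ℝ), (0:Evec n)) :=
      fderiv_clm_comp' (ContinuousLinearMap.apply ℝ (Psp n)
        (((1:ℝ), (0:Evec n)) : Qsp n)) (hDFdiff q hq) u
    have hR : fderiv ℝ (fun q' => -(hamVF A (F q'))) q u
        = -(φH ((fderiv ℝ (fderiv ℝ A) (F q)) (fderiv ℝ F q u))) := by
      have hcomp : HasFDerivAt (fun q' => hamVF A (F q'))
          ((φH.comp (fderiv ℝ (fderiv ℝ A) (F q))).comp (fderiv ℝ F q)) q :=
        (hhamd (F q) (hFmem q hq)).comp q (hFdiff q hq).hasFDerivAt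
      rw [fderiv_fun_neg, hcomp.fderiv]
      simp only [ContinuousLinearMap.neg_apply, ContinuousLinearMap.comp_apply]
    rw [← hL, Filter.EventuallyEq.fderiv_eq hev, hR]
  -- the Lagrangian (closedness) invariant
  have hwzero : ∀ q ∈ V, ∀ i j : Fin n,
      ∑ k, (fderiv ℝ F q ((0:ℝ), Pi.single i 1)).2 k * (fderiv ℝ F q ((0:ℝ), Pi.single j 1)).1 k
      = ∑ k, (fderiv ℝ F q ((0:ℝ), Pi.single j 1)).2 k
          * (fderiv ℝ F q ((0:ℝ), Pi.single i 1)).1 k := by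
    intro q hq i j
    obtain ⟨h1, h2⟩ := (hVmem q).1 hq
    set uu : Fin n → ℝ → Psp n :=
      fun l s => fderiv ℝ F ((s : ℝ), q.2) ((0:ℝ), Pi.single l 1) with huu
    set w : ℝ → ℝ := fun s =>
      (∑ k, (uu i s).2 k * (uu j s).1 k) - ∑ k, (uu j s).2 k * (uu i s).1 k with hw
    have hsV : ∀ s ∈ Ioo (-ε) ε, ((s:ℝ), q.2) ∈ V :=
      fun s hs => (hVmem _).2 ⟨abs_lt.2 ⟨hs.1, hs.2⟩, h2⟩
    have huder : ∀ l : Fin n, ∀ s ∈ Ioo (-ε) ε,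
        HasDerivAt (uu l) (-(φH ((fderiv ℝ (fderiv ℝ A) (F ((s:ℝ), q.2)))
          (fderiv ℝ F ((s:ℝ), q.2) ((0:ℝ), Pi.single l 1))))) s := by
      intro l s hs
      have hcurve : HasDerivAt (fun s : ℝ => ((s : ℝ), q.2)) (((1:ℝ), (0:Evec n)) : Qsp n) s :=
        (hasDerivAt_id s).prodMk (hasDerivAt_const s q.2)
      have hl : HasFDerivAt (fderiv ℝ F) (fderiv ℝ (fderiv ℝ F) ((s:ℝ), q.2)) ((s:ℝ), q.2) :=
        (hDFdiff _ (hsV s hs)).hasFDerivAt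
      have hd1 : HasDerivAt (fun τ : ℝ => fderiv ℝ F ((τ:ℝ), q.2))
          (fderiv ℝ (fderiv ℝ F) ((s:ℝ), q.2) ((1:ℝ), (0:Evec n))) s :=
        hl.comp_hasDerivAt s hcurve
      have hd2 : HasDerivAt (uu l)
          ((fderiv ℝ (fderiv ℝ F) ((s:ℝ), q.2) ((1:ℝ), (0:Evec n))) ((0:ℝ), Pi.single l 1)) s :=
        hasDerivAt_clm_comp
          (ContinuousLinearMap.apply ℝ (Psp n) (((0:ℝ), Pi.single l 1) : Qsp n)) hd1
      have heq : (fderiv ℝ (fderiv ℝ F) ((s:ℝ), q.2) ((1:ℝ), (0:Evec n)))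
            ((0:ℝ), Pi.single l 1)
          = -(φH ((fderiv ℝ (fderiv ℝ A) (F ((s:ℝ), q.2)))
              (fderiv ℝ F ((s:ℝ), q.2) ((0:ℝ), Pi.single l 1)))) := by
        rw [h2symm _ (hsV s hs), hkey _ (hsV s hs)]
      rwa [heq] at hd2
    have hwder : ∀ s ∈ Ioo (-ε) ε, HasDerivAt w 0 s := by
      intro s hs
      set Cm := fderiv ℝ (fderiv ℝ A) (F ((s:ℝ), q.2)) with hCm
      set ui := fderiv ℝ F ((s:ℝ), q.2) ((0:ℝ), Pi.single i 1) with hui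
      set uj := fderiv ℝ F ((s:ℝ), q.2) ((0:ℝ), Pi.single j 1) with huj
      have hi := huder i s hs
      have hj := huder j s hs
      have hterm1 : ∀ k : Fin n, HasDerivAt (fun s => (uu i s).2 k * (uu j s).1 k)
          ((-(φH (Cm ui))).2 k * (uu j s).1 k + (uu i s).2 k * (-(φH (Cm uj))).1 k) s := by
        intro k
        have ha : HasDerivAt (fun s => (uu i s).2 k) ((-(φH (Cm ui))).2 k) s :=
          hasDerivAt_clm_comp ((ContinuousLinearMap.proj k).comp
            (ContinuousLinearMap.snd ℝ (Evec n) (Evec n))) hi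
        have hb : HasDerivAt (fun s => (uu j s).1 k) ((-(φH (Cm uj))).1 k) s :=
          hasDerivAt_clm_comp ((ContinuousLinearMap.proj k).comp
            (ContinuousLinearMap.fst ℝ (Evec n) (Evec n))) hj
        exact ha.mul hb
      have hterm2 : ∀ k : Fin n, HasDerivAt (fun s => (uu j s).2 k * (uu i s).1 k)
          ((-(φH (Cm uj))).2 k * (uu i s).1 k + (uu j s).2 k * (-(φH (Cm ui))).1 k) s := by
        intro k
        have ha : HasDerivAt (fun s => (uu j s).2 k) ((-(φH (Cm uj))).2 k) s :=
          hasDerivAt_clm_comp ((ContinuousLinearMap.proj k).comp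
            (ContinuousLinearMap.snd ℝ (Evec n) (Evec n))) hj
        have hb : HasDerivAt (fun s => (uu i s).1 k) ((-(φH (Cm ui))).1 k) s :=
          hasDerivAt_clm_comp ((ContinuousLinearMap.proj k).comp
            (ContinuousLinearMap.fst ℝ (Evec n) (Evec n))) hi
        exact ha.mul hb
      have hsum1 := HasDerivAt.sum (fun k (_ : k ∈ Finset.univ) => hterm1 k)
      have hsum2 := HasDerivAt.sum (fun k (_ : k ∈ Finset.univ) => hterm2 k)
      have hwd := hsum1.sub hsum2
      have hDval : (∑ k, ((-(φH (Cm ui))).2 k * (uu j s).1 k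
            + (uu i s).2 k * (-(φH (Cm uj))).1 k))
          - ∑ k, ((-(φH (Cm uj))).2 k * (uu i s).1 k
            + (uu j s).2 k * (-(φH (Cm ui))).1 k) = 0 := by
        have e1 : ∀ (L' : Psp n →L[ℝ] ℝ) (k : Fin n),
            (-(φH L')).2 k = L' ((Pi.single k 1 : Evec n), 0) := by
          intro L' k
          rw [Prod.snd_neg, Pi.neg_apply, hφH2, neg_neg]
        have e2 : ∀ (L' : Psp n →L[ℝ] ℝ) (k : Fin n),
            (-(φH L')).1 k = -(L' ((0:Evec n), Pi.single k 1)) := by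
          intro L' k
          rw [Prod.fst_neg, Pi.neg_apply, hφH1]
        have hexp1 : (Cm ui) uj = (∑ k, uj.1 k * (Cm ui) (Pi.single k 1, 0))
            + ∑ k, uj.2 k * (Cm ui) (0, Pi.single k 1) := by
          rw [clmP_expand]
          simp only [smul_eq_mul]
        have hexp2 : (Cm uj) ui = (∑ k, ui.1 k * (Cm uj) (Pi.single k 1, 0))
            + ∑ k, ui.2 k * (Cm uj) (0, Pi.single k 1) := by
          rw [clmP_expand]
          simp only [smul_eq_mul]
        have hzero : (Cm ui) uj = (Cm uj) ui :=
          hAsymm (F ((s:ℝ), q.2)) (hFmem _ (hsV s hs)) ui uj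
        have hval : ∀ l, uu l s = fderiv ℝ F ((s:ℝ), q.2) ((0:ℝ), Pi.single l 1) := fun l => rfl
        simp only [hval, ← hui, ← huj, e1, e2]
        rw [Finset.sum_add_distrib, Finset.sum_add_distrib]
        have m1 : ∑ k, (Cm ui) ((Pi.single k 1 : Evec n), 0) * uj.1 k
            = ∑ k, uj.1 k * (Cm ui) (Pi.single k 1, 0) :=
          Finset.sum_congr rfl fun k _ => mul_comm _ _
        have m2 : ∑ k, ui.2 k * -((Cm uj) ((0:Evec n), Pi.single k 1))
            = -∑ k, ui.2 k * (Cm uj) (0, Pi.single k 1) := by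
          simp only [mul_neg]
          exact Finset.sum_neg_distrib _
        have m3 : ∑ k, (Cm uj) ((Pi.single k 1 : Evec n), 0) * ui.1 k
            = ∑ k, ui.1 k * (Cm uj) (Pi.single k 1, 0) :=
          Finset.sum_congr rfl fun k _ => mul_comm _ _
        have m4 : ∑ k, uj.2 k * -((Cm ui) ((0:Evec n), Pi.single k 1))
            = -∑ k, uj.2 k * (Cm ui) (0, Pi.single k 1) := by
          simp only [mul_neg]
          exact Finset.sum_neg_distrib _
        rw [m1, m2, m3, m4]
        linarith [hexp1, hexp2, hzero]
      rw [hDval] at hwd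
      exact hwd.congr_of_eventuallyEq (Filter.Eventually.of_forall fun t => by
        simp [hw, Finset.sum_apply])
    have hq1Ioo : q.1 ∈ Ioo (-ε) ε := by
      rw [abs_lt] at h1
      exact ⟨h1.1, h1.2⟩
    have h0Ioo : (0:ℝ) ∈ Ioo (-ε) ε := ⟨by linarith, by linarith⟩
    have hcon : w q.1 = w 0 := const_of_deriv_zero_Ioo hwder hq1Ioo h0Ioo
    -- compute w 0
    have hαdiff : DifferentiableAt ℝ α q.2 :=
      (hα.contDiffAt (hU.mem_nhds h2)).differentiableAt (by simp)
    have huu0 : ∀ l : Fin n, uu l 0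
        = ((Pi.single l 1 : Evec n), fderiv ℝ α q.2 (Pi.single l 1)) := by
      intro l
      have h0V : ((0:ℝ), q.2) ∈ V := hsV 0 h0Ioo
      have hpart : fderiv ℝ (fun z => F ((0:ℝ), z)) q.2
          = (fderiv ℝ F ((0:ℝ), q.2)).comp inrQ := (hDFx _ h0V).fderiv
      have hev : (fun z => F ((0:ℝ), z)) =ᶠ[nhds q.2] (fun z => ((z : Evec n), α z)) := by
        filter_upwards [hU.mem_nhds h2] with z hz
        show Φ (-(0:ℝ)) (z, α z) = (z, α z)
        rw [neg_zero]
        exact hΦ0 _ (hα𝒟 z hz)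
      have hgr : fderiv ℝ (fun z => ((z : Evec n), α z)) q.2
          = (ContinuousLinearMap.id ℝ (Evec n)).prod (fderiv ℝ α q.2) :=
        ((hasFDerivAt_id q.2).prodMk hαdiff.hasFDerivAt).fderiv
      have h5 : fderiv ℝ F ((0:ℝ), q.2) ((0:ℝ), Pi.single l 1)
          = fderiv ℝ (fun z => F ((0:ℝ), z)) q.2 (Pi.single l 1) := by
        rw [hpart]
        rfl
      show fderiv ℝ F ((0:ℝ), q.2) ((0:ℝ), Pi.single l 1) = _
      rw [h5, Filter.EventuallyEq.fderiv_eq hev, hgr]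
      rfl
    have hw0 : w 0 = 0 := by
      rw [hw]
      simp only [huu0]
      have c1 : ∑ k, (fderiv ℝ α q.2 (Pi.single i 1)) k * (Pi.single j 1 : Evec n) k
          = (fderiv ℝ α q.2 (Pi.single i 1)) j := by
        rw [Finset.sum_eq_single j]
        · simp
        · intro b _ hb
          simp [Pi.single_apply, hb]
        · intro hj'
          exact absurd (Finset.mem_univ j) hj'
      have c2 : ∑ k, (fderiv ℝ α q.2 (Pi.single j 1)) k * (Pi.single i 1 : Evec n) k
          = (fderiv ℝ α q.2 (Pi.single j 1)) i := by
        rw [Finset.sum_eq_single i]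
        · simp
        · intro b _ hb
          simp [Pi.single_apply, hb]
        · intro hi'
          exact absurd (Finset.mem_univ i) hi'
      show (∑ k, (fderiv ℝ α q.2 (Pi.single i 1)) k * (Pi.single j 1 : Evec n) k)
          - ∑ k, (fderiv ℝ α q.2 (Pi.single j 1)) k * (Pi.single i 1 : Evec n) k = 0
      rw [c1, c2]
      have d1 : (fderiv ℝ α q.2 (Pi.single i 1)) j
          = fderiv ℝ (fun z => α z j) q.2 (Pi.single i 1) := (fderiv_pi_app hαdiff j _).symm
      have d2 : (fderiv ℝ α q.2 (Pi.single j 1)) i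
          = fderiv ℝ (fun z => α z i) q.2 (Pi.single j 1) := (fderiv_pi_app hαdiff i _).symm
      rw [d1, d2, hαsymm q.2 h2 i j, sub_self]
    have hwq1 : w q.1 = 0 := by rw [hcon, hw0]
    have huuq : ∀ l : Fin n, uu l q.1 = fderiv ℝ F q ((0:ℝ), Pi.single l 1) := by
      intro l
      show fderiv ℝ F ((q.1 : ℝ), q.2) ((0:ℝ), Pi.single l 1) = _
      rw [Prod.mk.eta]
    have := sub_eq_zero.mp hwq1
    rw [huuq i, huuq j] at this
    exact this
  -- symmetry of the Jacobian
  have hSymm : ∀ p ∈ tildeU Φ α U ε, SymmJacAt μ p := by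
    intro p hp
    have hp' : p ∈ G '' V := by rwa [htU] at hp
    obtain ⟨hq, hGq⟩ := hH1 p hp'
    set q := H p with hqdef
    have hμdiff : DifferentiableAt ℝ μ p :=
      (hμsm.contDiffAt (hOpen.mem_nhds hp)).differentiableAt (by simp)
    have hνfd : HasFDerivAt ν (((fderiv ℝ A (F q)).comp (fderiv ℝ F q)).prod
        (sndP.comp (fderiv ℝ F q))) q :=
      ((hAdiff _ (hFmem q hq)).hasFDerivAt.comp q (hFdiff q hq).hasFDerivAt).prodMk
        (sndP.hasFDerivAt.comp q (hFdiff q hq).hasFDerivAt)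
    have hνapp : ∀ u : Qsp n, fderiv ℝ ν q u
        = (fderiv ℝ A (F q) (fderiv ℝ F q u), (fderiv ℝ F q u).2) := by
      intro u
      rw [hνfd.fderiv]
      rfl
    have hchain : fderiv ℝ ν q = (fderiv ℝ μ p).comp (fderiv ℝ G q) := by
      have hev : (μ ∘ G) =ᶠ[nhds q] ν := by
        filter_upwards [hVopen.mem_nhds hq] with y hy
        exact hμG y hy
      have hcomp := fderiv_comp q
        (show DifferentiableAt ℝ μ (G q) by rw [hGq]; exact hμdiff) (hGdiff q hq)
      rw [hGq] at hcomp
      rw [← Filter.EventuallyEq.fderiv_eq hev, hcomp]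
    have hdot : ∀ (a c : ℝ) (b d : Evec n),
        dotQ ((a, b) : Qsp n) ((c, d) : Qsp n) = a * c + ∑ k, b k * d k :=
      fun _ _ _ _ => rfl
    set L := fderiv ℝ A (F q) with hL
    have hνes : fderiv ℝ ν q (((1:ℝ), (0:Evec n)) : Qsp n)
        = (L (fderiv ℝ F q ((1:ℝ), (0:Evec n))), (fderiv ℝ F q ((1:ℝ), (0:Evec n))).2) :=
      hνapp _
    have hνei : ∀ i : Fin n, fderiv ℝ ν q (((0:ℝ), Pi.single i 1) : Qsp n)
        = (L (fderiv ℝ F q ((0:ℝ), Pi.single i 1)),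
            (fderiv ℝ F q ((0:ℝ), Pi.single i 1)).2) :=
      fun i => hνapp _
    have hDGes : fderiv ℝ G q (((1:ℝ), (0:Evec n)) : Qsp n)
        = ((1:ℝ), (fderiv ℝ F q ((1:ℝ), (0:Evec n))).1) := hDGapp q hq _
    have hDGei : ∀ i : Fin n, fderiv ℝ G q (((0:ℝ), Pi.single i 1) : Qsp n)
        = ((0:ℝ), (fderiv ℝ F q ((0:ℝ), Pi.single i 1)).1) := fun i => hDGapp q hq _
    have hXes1 : ∀ k : Fin n, (fderiv ℝ F q (((1:ℝ), (0:Evec n)) : Qsp n)).1 k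
        = -(L ((0:Evec n), Pi.single k 1)) := by
      intro k
      rw [hDFes q hq]
      show -((hamVF A (F q)).1 k) = _
      rw [hL]
      rfl
    have hXes2 : ∀ k : Fin n, (fderiv ℝ F q (((1:ℝ), (0:Evec n)) : Qsp n)).2 k
        = L ((Pi.single k 1 : Evec n), 0) := by
      intro k
      rw [hDFes q hq]
      show -((hamVF A (F q)).2 k) = _
      rw [hL]
      show -(-(fderiv ℝ A (F q) ((Pi.single k 1 : Evec n), 0))) = _
      rw [neg_neg]
    have hBsymm : ∀ u v : Qsp n, dotQ (fderiv ℝ ν q u) (fderiv ℝ G q v)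
        = dotQ (fderiv ℝ ν q v) (fderiv ℝ G q u) := by
      refine dotQ_symm_ext (fderiv ℝ ν q) (fderiv ℝ G q) ?_ ?_
      · intro i
        rw [hνes, hνei i, hDGes, hDGei i, hdot, hdot]
        have hexp : L (fderiv ℝ F q ((0:ℝ), Pi.single i 1))
            = (∑ k, (fderiv ℝ F q ((0:ℝ), Pi.single i 1)).1 k
                * L ((Pi.single k 1 : Evec n), 0))
              + ∑ k, (fderiv ℝ F q ((0:ℝ), Pi.single i 1)).2 k
                * L ((0:Evec n), Pi.single k 1) := by
          rw [clmP_expand]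
          simp only [smul_eq_mul]
        have m1 : ∑ k, (fderiv ℝ F q (((1:ℝ), (0:Evec n)) : Qsp n)).2 k
              * (fderiv ℝ F q ((0:ℝ), Pi.single i 1)).1 k
            = ∑ k, (fderiv ℝ F q ((0:ℝ), Pi.single i 1)).1 k
              * L ((Pi.single k 1 : Evec n), 0) := by
          refine Finset.sum_congr rfl fun k _ => ?_
          rw [hXes2 k, mul_comm]
        have m2 : ∑ k, (fderiv ℝ F q ((0:ℝ), Pi.single i 1)).2 k
              * (fderiv ℝ F q (((1:ℝ), (0:Evec n)) : Qsp n)).1 k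
            = -∑ k, (fderiv ℝ F q ((0:ℝ), Pi.single i 1)).2 k
              * L ((0:Evec n), Pi.single k 1) := by
          rw [← Finset.sum_neg_distrib]
          refine Finset.sum_congr rfl fun k _ => ?_
          rw [hXes1 k, mul_neg]
        rw [m1, m2]
        linarith [hexp]
      · intro i j
        rw [hνei i, hνei j, hDGei i, hDGei j, hdot, hdot]
        rw [mul_zero, mul_zero, zero_add, zero_add]
        exact hwzero q hq i j
    have hm : ∀ u v : Qsp n, dotQ (fderiv ℝ μ p u) v = dotQ (fderiv ℝ μ p v) u := by
      intro u v
      obtain ⟨u', hu'⟩ := (hDGbij q hq).2 u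
      obtain ⟨v', hv'⟩ := (hDGbij q hq).2 v
      have t1 : fderiv ℝ ν q u' = fderiv ℝ μ p u := by
        rw [hchain, ContinuousLinearMap.comp_apply, hu']
      have t2 : fderiv ℝ ν q v' = fderiv ℝ μ p v := by
        rw [hchain, ContinuousLinearMap.comp_apply, hv']
      rw [← t1, ← t2, ← hu', ← hv']
      exact hBsymm u' v'
    constructor
    · intro i
      have g1 : fderiv ℝ (fun q' => (μ q').1) p ((0:ℝ), Pi.single i 1)
          = (fderiv ℝ μ p (((0:ℝ), Pi.single i 1) : Qsp n)).1 := fderiv_fst'' hμdiff _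
      have g2 : fderiv ℝ (fun q' => (μ q').2 i) p ((1:ℝ), (0:Evec n))
          = (fderiv ℝ μ p (((1:ℝ), (0:Evec n)) : Qsp n)).2 i := fderiv_snd_app hμdiff i _
      rw [g1, g2]
      have h6 := hm (((0:ℝ), Pi.single i 1) : Qsp n) (((1:ℝ), (0:Evec n)) : Qsp n)
      rw [dotQ_es, dotQ_ei] at h6
      exact h6
    · intro i j
      have g1 : fderiv ℝ (fun q' => (μ q').2 j) p ((0:ℝ), Pi.single i 1)
          = (fderiv ℝ μ p (((0:ℝ), Pi.single i 1) : Qsp n)).2 j := fderiv_snd_app hμdiff j _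
      have g2 : fderiv ℝ (fun q' => (μ q').2 i) p ((0:ℝ), Pi.single j 1)
          = (fderiv ℝ μ p (((0:ℝ), Pi.single j 1) : Qsp n)).2 i := fderiv_snd_app hμdiff i _
      rw [g1, g2]
      have h6 := hm (((0:ℝ), Pi.single i 1) : Qsp n) (((0:ℝ), Pi.single j 1) : Qsp n)
      rw [dotQ_ei, dotQ_ei] at h6
      exact h6
  -- eikonal solution
  have hSol : IsEikonalSol 𝒟 A α U (tildeU Φ α U ε) μ := by
    refine ⟨hμsm, ?_, ?_⟩
    · intro p hp
      have hp' : p ∈ G '' V := htU ▸ hp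
      obtain ⟨hq, hGq⟩ := hH1 p hp'
      have h2 : p.2 = (F (H p)).1 := by
        conv_lhs => rw [← hGq]
      have h1 : ((p.2 : Evec n), (μ p).2) = F (H p) := by
        rw [h2]
        show ((F (H p)).1, (F (H p)).2) = F (H p)
        exact Prod.mk.eta
      refine ⟨hSymm p hp, ?_, ?_⟩
      · rw [h1]
        exact hFmem _ hq
      · rw [h1]
        rfl
    · intro x hx
      have hq0 : ((0:ℝ), x) ∈ V := (hVmem (0,x)).2 ⟨by simpa using hε, hx⟩
      have hG0 : G ((0:ℝ), x) = ((0:ℝ), x) := by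
        show (((0:ℝ), (F ((0:ℝ), x)).1) : Qsp n) = ((0:ℝ), x)
        have : F ((0:ℝ), x) = (x, α x) := by
          show Φ (-(0:ℝ)) (x, α x) = (x, α x)
          rw [neg_zero]
          exact hΦ0 _ (hα𝒟 x hx)
        rw [this]
      have : μ ((0:ℝ), x) = ν ((0:ℝ), x) := by
        conv_lhs => rw [← hG0]
        exact hμG _ hq0
      rw [this]
      show (F ((0:ℝ), x)).2 = α x
      have : F ((0:ℝ), x) = (x, α x) := by
        show Φ (-(0:ℝ)) (x, α x) = (x, α x)
        rw [neg_zero]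
        exact hΦ0 _ (hα𝒟 x hx)
      rw [this]
  -- uniqueness
  have hUniq : ∀ μ' : ℝ × (Fin n → ℝ) → ℝ × (Fin n → ℝ),
      IsEikonalSol 𝒟 A α U (tildeU Φ α U ε) μ' → Set.EqOn μ' μ (tildeU Φ α U ε) := by
    intro μ' hμ'
    obtain ⟨hsm', hprop', hinit'⟩ := hμ'
    set sndQ : Qsp n →L[ℝ] Evec n := ContinuousLinearMap.snd ℝ ℝ (Evec n) with hsndQ
    have key : ∀ x ∈ U, ∀ s ∈ Ioo (-ε) ε, (μ' (G (s, x))).2 = (F ((s:ℝ), x)).2 := by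
      intro x hx
      set ξ : ℝ → Evec n := fun s => (μ' (G ((s:ℝ), x))).2 with hξdef
      set Ξ : ℝ → Evec n := fun s => (F ((s:ℝ), x)).2 with hΞdef
      set gg : ℝ → Evec n → Evec n := fun t z => fun i =>
        fderiv ℝ A (((F ((t:ℝ), x)).1, z) : Psp n) ((Pi.single i 1 : Evec n), 0)
        + ∑ k, (fderiv ℝ A (((F ((t:ℝ), x)).1, z) : Psp n) ((0:Evec n), Pi.single k 1)
             - fderiv ℝ A (F ((t:ℝ), x)) ((0:Evec n), Pi.single k 1))
            * fderiv ℝ (fun p' => (μ' p').2 i) (G ((t:ℝ), x)) ((0:ℝ), Pi.single k 1)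
        with hggdef
      have hqV : ∀ s ∈ Ioo (-ε) ε, ((s:ℝ), x) ∈ V :=
        fun s hs => (hVmem _).2 ⟨abs_lt.2 ⟨hs.1, hs.2⟩, hx⟩
      have hpU : ∀ s ∈ Ioo (-ε) ε, G ((s:ℝ), x) ∈ tildeU Φ α U ε := by
        intro s hs
        rw [htU]
        exact ⟨_, hqV s hs, rfl⟩
      -- the ODE satisfied by Ξ
      have hΞode : ∀ s ∈ Ioo (-ε) ε, HasDerivAt Ξ (gg s (Ξ s)) s := by
        intro s hs
        have hgΞ : gg s (Ξ s) = fun i => fderiv ℝ A (F ((s:ℝ), x))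
            ((Pi.single i 1 : Evec n), 0) := by
          funext i
          show fderiv ℝ A (((F ((s:ℝ), x)).1, (F ((s:ℝ), x)).2) : Psp n) (Pi.single i 1, 0)
              + _ = _
          rw [Prod.mk.eta]
          simp
        have hd : (-hamVF A (F ((s:ℝ), x))).2
            = fun i => fderiv ℝ A (F ((s:ℝ), x)) ((Pi.single i 1 : Evec n), 0) := by
          funext i
          show -(-(fderiv ℝ A (F ((s:ℝ), x)) ((Pi.single i 1 : Evec n), 0))) = _
          rw [neg_neg]
        have h0 : HasDerivAt Ξ ((-hamVF A (F ((s:ℝ), x))).2) s :=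
          hasDerivAt_clm_comp sndP (hFd ((s:ℝ), x) (hqV s hs))
        rw [hgΞ, ← hd]
        exact h0
      -- the ODE satisfied by ξ
      have hxiode : ∀ s ∈ Ioo (-ε) ε, HasDerivAt ξ (gg s (ξ s)) s := by
        intro s hs
        have hqV' := hqV s hs
        have hpU' := hpU s hs
        obtain ⟨hsymm', hmem', heik'⟩ := hprop' _ hpU'
        have hμ'diff : DifferentiableAt ℝ μ' (G ((s:ℝ), x)) :=
          (hsm'.contDiffAt (hOpen.mem_nhds hpU')).differentiableAt (by simp)
        have hXd := hFd ((s:ℝ), x) hqV'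
        have hrd : HasDerivAt (fun τ : ℝ => (F ((τ:ℝ), x)).1)
            ((-hamVF A (F ((s:ℝ), x))).1) s := hasDerivAt_clm_comp fstP hXd
        have hcurve : HasDerivAt (fun τ : ℝ => G ((τ:ℝ), x))
            (((1:ℝ), (-hamVF A (F ((s:ℝ), x))).1) : Qsp n) s :=
          (hasDerivAt_id s).prodMk hrd
        have hcomp := hμ'diff.hasFDerivAt.comp_hasDerivAt s hcurve
        have hξd : HasDerivAt ξ ((fderiv ℝ μ' (G ((s:ℝ), x))
            (((1:ℝ), (-hamVF A (F ((s:ℝ), x))).1) : Qsp n)).2) s :=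
          hasDerivAt_clm_comp sndQ hcomp
        suffices hval : (fderiv ℝ μ' (G ((s:ℝ), x))
            (((1:ℝ), (-hamVF A (F ((s:ℝ), x))).1) : Qsp n)).2 = gg s (ξ s) by
          rwa [hval] at hξd
        funext i
        set p := G ((s:ℝ), x) with hpdef
        set rd := (-hamVF A (F ((s:ℝ), x))).1 with hrddef
        set zz : Psp n := (((F ((s:ℝ), x)).1, (μ' (G ((s:ℝ), x))).2) : Psp n) with hzzdef
        have hz𝒟 : zz ∈ 𝒟 := hmem'
        have st0 : (fderiv ℝ μ' p (((1:ℝ), rd) : Qsp n)).2 i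
            = fderiv ℝ (fun p' => (μ' p').2 i) p (((1:ℝ), rd) : Qsp n) :=
          (fderiv_snd_app hμ'diff i _).symm
        have hsplit1 : (((1:ℝ), rd) : Qsp n) = (((1:ℝ), (0:Evec n)) : Qsp n)
            + (((0:ℝ), rd) : Qsp n) := by
          rw [Prod.ext_iff]
          constructor <;> simp
        have st1 : fderiv ℝ (fun p' => (μ' p').2 i) p (((1:ℝ), rd) : Qsp n)
            = fderiv ℝ (fun p' => (μ' p').2 i) p (((1:ℝ), (0:Evec n)) : Qsp n)
              + fderiv ℝ (fun p' => (μ' p').2 i) p (((0:ℝ), rd) : Qsp n) := by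
          rw [hsplit1, map_add]
        have st2 : fderiv ℝ (fun p' => (μ' p').2 i) p (((0:ℝ), rd) : Qsp n)
            = ∑ k, rd k • fderiv ℝ (fun p' => (μ' p').2 i) p ((0:ℝ), Pi.single k 1) :=
          clmQ_sndpart _ _
        have st3 : ∀ k : Fin n, rd k
            = -(fderiv ℝ A (F ((s:ℝ), x)) ((0:Evec n), Pi.single k 1)) := fun k => rfl
        have st4 : fderiv ℝ (fun p' => (μ' p').2 i) p (((1:ℝ), (0:Evec n)) : Qsp n)
            = fderiv ℝ (fun p' => (μ' p').1) p ((0:ℝ), Pi.single i 1) := (hsymm'.1 i).symm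
        have hev1 : (fun p' => (μ' p').1)
            =ᶠ[nhds p] (fun p' => A (p'.2, (μ' p').2)) := by
          filter_upwards [hOpen.mem_nhds hpU'] with y hy
          exact (hprop' y hy).2.2
        have hΘfd : HasFDerivAt (fun p' : Qsp n => ((p'.2, (μ' p').2) : Psp n))
            ((ContinuousLinearMap.snd ℝ ℝ (Evec n)).prod
              (sndQ.comp (fderiv ℝ μ' p))) p :=
          (hasFDerivAt_snd).prodMk (sndQ.hasFDerivAt.comp p hμ'diff.hasFDerivAt)
        have st5 : fderiv ℝ (fun p' => (μ' p').1) p ((0:ℝ), Pi.single i 1)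
            = fderiv ℝ A zz ((Pi.single i 1 : Evec n),
                (fderiv ℝ μ' p (((0:ℝ), Pi.single i 1) : Qsp n)).2) := by
          rw [Filter.EventuallyEq.fderiv_eq hev1]
          have hAfd : HasFDerivAt A (fderiv ℝ A zz)
              ((fun p' : Qsp n => ((p'.2, (μ' p').2) : Psp n)) p) :=
            (hAdiff zz hz𝒟).hasFDerivAt
          have hcomp2 : HasFDerivAt (fun p' : Qsp n => A (p'.2, (μ' p').2))
              ((fderiv ℝ A zz).comp ((ContinuousLinearMap.snd ℝ ℝ (Evec n)).prod
                (sndQ.comp (fderiv ℝ μ' p)))) p := hAfd.comp p hΘfd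
          rw [hcomp2.fderiv]
          rfl
        set ww : Evec n := (fderiv ℝ μ' p (((0:ℝ), Pi.single i 1) : Qsp n)).2 with hwwdef
        have st6 : fderiv ℝ A zz ((Pi.single i 1 : Evec n), ww)
            = fderiv ℝ A zz ((Pi.single i 1 : Evec n), (0:Evec n))
              + fderiv ℝ A zz ((0:Evec n), ww) := by
          have : ((Pi.single i 1 : Evec n), ww)
              = (((Pi.single i 1 : Evec n), (0:Evec n)) : Psp n)
                + (((0:Evec n), ww) : Psp n) := by
            rw [Prod.ext_iff]
            constructor <;> simp
          rw [this, map_add]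
        have st7 : fderiv ℝ A zz ((0:Evec n), ww)
            = ∑ k, ww k • fderiv ℝ A zz ((0:Evec n), Pi.single k 1) := clmP_sndpart _ _
        have st8 : ∀ k : Fin n, ww k
            = fderiv ℝ (fun p' => (μ' p').2 i) p ((0:ℝ), Pi.single k 1) := by
          intro k
          have h8 : ww k = fderiv ℝ (fun p' => (μ' p').2 k) p ((0:ℝ), Pi.single i 1) :=
            (fderiv_snd_app hμ'diff k _).symm
          rw [h8]
          exact hsymm'.2 i k
        -- assemble
        show (fderiv ℝ μ' p (((1:ℝ), rd) : Qsp n)).2 i = _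
        rw [st0, st1, st4, st5, st6, st7, st2]
        show fderiv ℝ A zz (Pi.single i 1, 0)
            + (∑ k, ww k • fderiv ℝ A zz ((0:Evec n), Pi.single k 1))
            + ∑ k, rd k • fderiv ℝ (fun p' => (μ' p').2 i) p ((0:ℝ), Pi.single k 1)
          = fderiv ℝ A zz (Pi.single i 1, 0)
            + ∑ k, (fderiv ℝ A zz ((0:Evec n), Pi.single k 1)
                - fderiv ℝ A (F ((s:ℝ), x)) ((0:Evec n), Pi.single k 1))
              * fderiv ℝ (fun p' => (μ' p').2 i) p ((0:ℝ), Pi.single k 1)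
        rw [add_assoc, ← Finset.sum_add_distrib]
        congr 1
        refine Finset.sum_congr rfl fun k _ => ?_
        rw [st8 k, st3 k]
        simp only [smul_eq_mul]
        ring
      -- initial condition
      have hinit0 : ξ 0 = Ξ 0 := by
        have hG0 : G ((0:ℝ), x) = ((0:ℝ), x) := by
          show (((0:ℝ), (F ((0:ℝ), x)).1) : Qsp n) = ((0:ℝ), x)
          have hF0 : F ((0:ℝ), x) = (x, α x) := by
            show Φ (-(0:ℝ)) (x, α x) = (x, α x)
            rw [neg_zero]
            exact hΦ0 _ (hα𝒟 x hx)
          rw [hF0]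
        have h1 : ξ 0 = α x := by
          show (μ' (G ((0:ℝ), x))).2 = α x
          rw [hG0]
          exact hinit' x hx
        have h2 : Ξ 0 = α x := by
          show (F ((0:ℝ), x)).2 = α x
          have hF0 : F ((0:ℝ), x) = (x, α x) := by
            show Φ (-(0:ℝ)) (x, α x) = (x, α x)
            rw [neg_zero]
            exact hΦ0 _ (hα𝒟 x hx)
          rw [hF0]
        rw [h1, h2]
      -- the agreement set is open
      have hSopen : ∀ s₀, s₀ ∈ Ioo (-ε) ε → ξ s₀ = Ξ s₀ →
          ∀ᶠ t in nhds s₀, t ∈ Ioo (-ε) ε ∧ ξ t = Ξ t := by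
        intro s₀ hs₀I hs₀eq
        -- smoothness of the right-hand side near the point
        have hq₀V := hqV s₀ hs₀I
        have hp₀U := hpU s₀ hs₀I
        have hz₀𝒟 : (((F ((s₀:ℝ), x)).1, ξ s₀) : Psp n) ∈ 𝒟 := (hprop' _ hp₀U).2.1
        have hF𝒟 : F ((s₀:ℝ), x) ∈ 𝒟 := hFmem _ hq₀V
        have c0 : ContDiffAt ℝ (⊤ : ℕ∞) (fun w : ℝ × Evec n => ((w.1, x) : Qsp n)) (s₀, ξ s₀) :=
          (contDiff_fst.prodMk contDiff_const).contDiffAt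
        have c1 : ContDiffAt ℝ (⊤ : ℕ∞) (fun w : ℝ × Evec n => F ((w.1 : ℝ), x)) (s₀, ξ s₀) :=
          ContDiffAt.comp (f := fun w : ℝ × Evec n => ((w.1, x) : Qsp n)) (s₀, ξ s₀) (hFca ((s₀:ℝ), x) hq₀V) c0
        have c2 : ContDiffAt ℝ (⊤ : ℕ∞) (fun w : ℝ × Evec n => (((F ((w.1:ℝ), x)).1, w.2) : Psp n))
            (s₀, ξ s₀) :=
          (ContDiffAt.comp (s₀, ξ s₀) (fstP.contDiff.contDiffAt) c1).prodMk contDiff_snd.contDiffAt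
        have c3 : ContDiffAt ℝ (⊤ : ℕ∞) (fun w : ℝ × Evec n =>
            fderiv ℝ A (((F ((w.1:ℝ), x)).1, w.2) : Psp n)) (s₀, ξ s₀) :=
          ContDiffAt.comp (s₀, ξ s₀) (hfAsm.contDiffAt (h𝒟.mem_nhds hz₀𝒟)) c2
        have c4 : ContDiffAt ℝ (⊤ : ℕ∞) (fun w : ℝ × Evec n =>
            fderiv ℝ A (F ((w.1:ℝ), x))) (s₀, ξ s₀) :=
          ContDiffAt.comp (s₀, ξ s₀) (hfAsm.contDiffAt (h𝒟.mem_nhds hF𝒟)) c1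
        have c5 : ContDiffAt ℝ (⊤ : ℕ∞) (fun w : ℝ × Evec n => G ((w.1:ℝ), x)) (s₀, ξ s₀) :=
          (contDiff_fst.contDiffAt).prodMk (ContDiffAt.comp (s₀, ξ s₀) (fstP.contDiff.contDiffAt) c1)
        have c6 : ∀ i : Fin n, ContDiffAt ℝ (⊤ : ℕ∞) (fun w : ℝ × Evec n =>
            fderiv ℝ (fun p' => (μ' p').2 i) (G ((w.1:ℝ), x))) (s₀, ξ s₀) := by
          intro i
          have hμ2i : ContDiffOn ℝ (⊤ : ℕ∞) (fun p' => (μ' p').2 i) (tildeU Φ α U ε) :=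
            ((ContinuousLinearMap.proj i).comp sndQ).contDiff.comp_contDiffOn hsm'
          exact ContDiffAt.comp (s₀, ξ s₀) ((hμ2i.fderiv_of_isOpen hOpen (by simp)).contDiffAt
            (hOpen.mem_nhds hp₀U)) c5
        have hGcd1 : ContDiffAt ℝ 1 (fun w : ℝ × Evec n => gg w.1 w.2) (s₀, ξ s₀) := by
          refine ContDiffAt.of_le (n := ((⊤ : ℕ∞) : WithTop ℕ∞)) ?_ (by exact_mod_cast (le_top : (1:ℕ∞) ≤ ⊤))
          refine contDiffAt_pi.2 fun i => ?_
          refine ContDiffAt.add ?_ ?_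
          · exact c3.clm_apply contDiffAt_const
          · refine ContDiffAt.sum fun k _ => ?_
            exact ((c3.clm_apply contDiffAt_const).sub
              (c4.clm_apply contDiffAt_const)).mul ((c6 i).clm_apply contDiffAt_const)
        obtain ⟨K, tset, htset, hlip⟩ := hGcd1.exists_lipschitzOnWith
        obtain ⟨η, hη, hball⟩ := Metric.mem_nhds_iff.1 htset
        set r : ℝ := η / 2 with hrdef
        have hr : 0 < r := by positivity
        have hξc : ContinuousAt ξ s₀ := (hxiode s₀ hs₀I).continuousAt
        have hΞc : ContinuousAt Ξ s₀ := (hΞode s₀ hs₀I).continuousAt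
        have hev2 : ∀ᶠ t in nhds s₀, dist (ξ t) (ξ s₀) ≤ r ∧ dist (Ξ t) (ξ s₀) ≤ r
            ∧ t ∈ Ioo (-ε) ε := by
          have e1 : ∀ᶠ t in nhds s₀, dist (ξ t) (ξ s₀) ≤ r := by
            have := hξc.preimage_mem_nhds (Metric.closedBall_mem_nhds (ξ s₀) hr)
            filter_upwards [this] with t ht
            exact Metric.mem_closedBall.1 ht
          have e2 : ∀ᶠ t in nhds s₀, dist (Ξ t) (ξ s₀) ≤ r := by
            have h9 : Metric.closedBall (ξ s₀) r ∈ nhds (Ξ s₀) := by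
              rw [← hs₀eq]
              exact Metric.closedBall_mem_nhds (ξ s₀) hr
            have := hΞc.preimage_mem_nhds h9
            filter_upwards [this] with t ht
            exact Metric.mem_closedBall.1 ht
          have e3 : ∀ᶠ t in nhds s₀, t ∈ Ioo (-ε) ε :=
            isOpen_Ioo.mem_nhds hs₀I
          filter_upwards [e1, e2, e3] with t h1 h2 h3
          exact ⟨h1, h2, h3⟩
        obtain ⟨δ₀, hδ₀, hδprop⟩ := Metric.eventually_nhds_iff.1 hev2
        set δ : ℝ := min (δ₀ / 2) r with hδdef
        have hδpos : 0 < δ := lt_min (by positivity) hr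
        have hδle : δ ≤ r := min_le_right _ _
        have hδlt : δ < δ₀ := lt_of_le_of_lt (min_le_left _ _) (by linarith)
        set cl : ℝ → ℝ := fun t => max (s₀ - δ) (min t (s₀ + δ)) with hcldef
        have hclmem : ∀ t : ℝ, dist (cl t) s₀ ≤ δ := by
          intro t
          have h1 : s₀ - δ ≤ cl t := le_max_left _ _
          have h2 : cl t ≤ s₀ + δ := max_le (by linarith) (min_le_right _ _)
          rw [Real.dist_eq, abs_le]
          constructor <;> linarith
        have hcleq : ∀ t ∈ Ioo (s₀ - δ) (s₀ + δ), cl t = t := by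
          intro t ht
          rw [hcldef]
          simp only
          rw [min_eq_left (le_of_lt ht.2), max_eq_right (le_of_lt ht.1)]
        set v : ℝ → Evec n → Evec n := fun t z => gg (cl t) z with hvdef
        have hv : ∀ t, LipschitzOnWith K (v t) (Metric.closedBall (ξ s₀) r) := by
          intro t
          refine LipschitzOnWith.of_dist_le_mul fun z hz z' hz' => ?_
          have hmem1 : ((cl t, z) : ℝ × Evec n) ∈ tset := by
            apply hball
            rw [Metric.mem_ball, Prod.dist_eq]
            have := hclmem t
            have hzd := Metric.mem_closedBall.1 hz
            refine max_lt ?_ ?_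
            · calc dist (cl t) s₀ ≤ δ := hclmem t
                _ ≤ r := hδle
                _ < η := by rw [hrdef]; linarith
            · calc dist z (ξ s₀) ≤ r := hzd
                _ < η := by rw [hrdef]; linarith
          have hmem2 : ((cl t, z') : ℝ × Evec n) ∈ tset := by
            apply hball
            rw [Metric.mem_ball, Prod.dist_eq]
            have hzd := Metric.mem_closedBall.1 hz'
            refine max_lt ?_ ?_
            · calc dist (cl t) s₀ ≤ δ := hclmem t
                _ ≤ r := hδle
                _ < η := by rw [hrdef]; linarith
            · calc dist z' (ξ s₀) ≤ r := hzd
                _ < η := by rw [hrdef]; linarith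
          have hd := hlip.dist_le_mul _ hmem1 _ hmem2
          have hdeq : dist ((cl t, z) : ℝ × Evec n) ((cl t, z') : ℝ × Evec n)
              = dist z z' := by
            rw [Prod.dist_eq]
            simp [dist_self, max_eq_right dist_nonneg]
          calc dist (v t z) (v t z')
              = dist ((fun w : ℝ × Evec n => gg w.1 w.2) (cl t, z))
                ((fun w : ℝ × Evec n => gg w.1 w.2) (cl t, z')) := rfl
            _ ≤ K * dist ((cl t, z) : ℝ × Evec n) ((cl t, z') : ℝ × Evec n) := hd
            _ = K * dist z z' := by rw [hdeq]
        have hsub : Ioo (s₀ - δ) (s₀ + δ) ⊆ Ioo (-ε) ε := by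
          intro t ht
          have : dist t s₀ < δ₀ := by
            rw [Real.dist_eq, abs_lt]
            constructor <;> [linarith [ht.1]; linarith [ht.2]]
          exact (hδprop this).2.2
        have hf : ∀ t ∈ Ioo (s₀ - δ) (s₀ + δ),
            HasDerivAt ξ (v t (ξ t)) t ∧ ξ t ∈ Metric.closedBall (ξ s₀) r := by
          intro t ht
          have htI : t ∈ Ioo (-ε) ε := hsub ht
          have htd : dist t s₀ < δ₀ := by
            rw [Real.dist_eq, abs_lt]
            constructor <;> [linarith [ht.1]; linarith [ht.2]]
          constructor
          · have := hxiode t htI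
            have hveq : v t (ξ t) = gg t (ξ t) := by
              rw [hvdef]
              simp only
              rw [hcleq t ht]
            rwa [hveq]
          · exact Metric.mem_closedBall.2 (hδprop htd).1
        have hg : ∀ t ∈ Ioo (s₀ - δ) (s₀ + δ),
            HasDerivAt Ξ (v t (Ξ t)) t ∧ Ξ t ∈ Metric.closedBall (ξ s₀) r := by
          intro t ht
          have htI : t ∈ Ioo (-ε) ε := hsub ht
          have htd : dist t s₀ < δ₀ := by
            rw [Real.dist_eq, abs_lt]
            constructor <;> [linarith [ht.1]; linarith [ht.2]]
          constructor
          · have := hΞode t htI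
            have hveq : v t (Ξ t) = gg t (Ξ t) := by
              rw [hvdef]
              simp only
              rw [hcleq t ht]
            rwa [hveq]
          · exact Metric.mem_closedBall.2 (hδprop htd).2.1
        have heqon := ODE_solution_unique_of_mem_Ioo (s := fun _ => Metric.closedBall (ξ s₀) r) (fun t _ => hv t)
          (⟨by linarith, by linarith⟩ : s₀ ∈ Ioo (s₀ - δ) (s₀ + δ)) hf hg hs₀eq
        have hIoo_nhds : Ioo (s₀ - δ) (s₀ + δ) ∈ nhds s₀ :=
          isOpen_Ioo.mem_nhds ⟨by linarith, by linarith⟩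
        filter_upwards [hIoo_nhds] with t ht
        exact ⟨hsub ht, heqon ht⟩
      -- the complement is open, so by connectedness they agree
      intro s hs
      by_contra hne
      have hT : IsOpen {t | t ∈ Ioo (-ε) ε ∧ ξ t ≠ Ξ t} := by
        rw [isOpen_iff_mem_nhds]
        rintro t ⟨htI, htne⟩
        have hc : ContinuousAt (fun t' => ξ t' - Ξ t') t :=
          ((hxiode t htI).continuousAt).sub ((hΞode t htI).continuousAt)
        have hne0 : ξ t - Ξ t ≠ 0 := sub_ne_zero.2 htne
        filter_upwards [hc.eventually_ne hne0, isOpen_Ioo.mem_nhds htI] with t' h1 h2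
        exact ⟨h2, sub_ne_zero.1 h1⟩
      have hSopen' : IsOpen {t | t ∈ Ioo (-ε) ε ∧ ξ t = Ξ t} := by
        rw [isOpen_iff_mem_nhds]
        rintro t ⟨htI, hteq⟩
        exact hSopen t htI hteq
      have h0I : (0:ℝ) ∈ Ioo (-ε) ε := ⟨by linarith, by linarith⟩
      have hcover : Ioo (-ε) ε ⊆ {t | t ∈ Ioo (-ε) ε ∧ ξ t = Ξ t}
          ∪ {t | t ∈ Ioo (-ε) ε ∧ ξ t ≠ Ξ t} := by
        intro t ht
        by_cases h : ξ t = Ξ t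
        · exact Or.inl ⟨ht, h⟩
        · exact Or.inr ⟨ht, h⟩
      have hne1 : (Ioo (-ε) ε ∩ {t | t ∈ Ioo (-ε) ε ∧ ξ t = Ξ t}).Nonempty :=
        ⟨0, h0I, h0I, hinit0⟩
      have hne2 : (Ioo (-ε) ε ∩ {t | t ∈ Ioo (-ε) ε ∧ ξ t ≠ Ξ t}).Nonempty :=
        ⟨s, hs, hs, hne⟩
      obtain ⟨t, htmem⟩ := isPreconnected_Ioo _ _ hSopen' hT hcover hne1 hne2
      exact htmem.2.2.2 htmem.2.1.2
    -- conclude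
    intro p hp
    rw [htU] at hp
    obtain ⟨q, hq, rfl⟩ := hp
    obtain ⟨h1, h2⟩ := (hVmem q).1 hq
    have hIoo : q.1 ∈ Ioo (-ε) ε := by
      rw [abs_lt] at h1
      exact ⟨h1.1, h1.2⟩
    have hkey := key q.2 h2 q.1 hIoo
    rw [Prod.mk.eta] at hkey
    have hpU' : G q ∈ tildeU Φ α U ε := by
      rw [htU]
      exact ⟨q, hq, rfl⟩
    have hfst : (μ' (G q)).1 = A ((G q).2, (μ' (G q)).2) := (hprop' _ hpU').2.2
    rw [hμG q hq]
    refine Prod.ext ?_ ?_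
    · show (μ' (G q)).1 = A (F q)
      rw [hfst, hkey]
    · exact hkey
  refine ⟨hOpen, μ, hSol, hUniq, ?_⟩
  intro s hs x hx
  have hq : ((s : ℝ), x) ∈ V := (hVmem (s,x)).2 ⟨hs, hx⟩
  have h1 : ((s : ℝ), (Φ (-s) (x, α x)).1) = G (s, x) := rfl
  rw [h1, hμG _ hq]
  show (A (F (s,x)), (F (s,x)).2) = (A (x, α x), (Φ (-s) (x, α x)).2)
  rw [hAinv _ hq]
end
end

section
/- Let W ⊆ ℝ^n be open and Q : W → Sym_n(ℝ) a smooth map into the symmetric n×n real matrices with Q(x) positive semidefinite for every x; set H(x,ξ) = ⟨ξ, Q(x)ξ⟩, with Hamiltonian vector field X_H = (∂_ξ H, −∂_x H). Let Φ : D → W × ℝ^n be a smooth local flow of X_H. Fix x ∈ W, t ∈ ℝ∖{0} and η ∈ ℝ^n with H(x,η) > 0; set λ = t/(2√(H(x,η))), and assume (1, (x, λη)) ∈ D. Let E be the map ζ ↦ pr₁ Φ(1, (x, (t/(2√(H(x,ζ))))·ζ)), defined on a neighbourhood of η in ℝ^n, and let G be the map ζ ↦ pr₁ Φ(1, (x,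 ζ)), defined on a neighbourhood of λη. Then the rank of the derivative DE|_η equals the rank of the restriction of the derivative DG|_{λη} to the hyperplane ker ℓ, where ℓ : ℝ^n → ℝ is the linear functional ℓ(v) = ⟨v, Q(x)(λη)⟩. In particular, if DG|_{λη} is invertible, then DE|_η has rank n−1. -/
open Real Set Matrix

noncomputable section

/-- The linear functional `v ↦ ⟨v, w⟩` on `ℝ^n`. -/
def dotLin {n : ℕ} (w : Fin n → ℝ) : (Fin n → ℝ) →ₗ[ℝ] ℝ where
  toFun v := v ⬝ᵥ w
  map_add' a b := by simp [add_dotProduct]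
  map_smul' c a := by simp [smul_dotProduct]

def dC {n : ℕ} (w : Fin n → ℝ) : (Fin n → ℝ) →L[ℝ] ℝ :=
  LinearMap.toContinuousLinearMap (dotLin w)

@[simp] lemma dC_apply {n : ℕ} (w v : Fin n → ℝ) : dC w v = v ⬝ᵥ w := rfl

def dotB {n : ℕ} : (Fin n → ℝ) →L[ℝ] (Fin n → ℝ) →L[ℝ] ℝ :=
  LinearMap.toContinuousLinearMap
  { toFun := fun u => dC u
    map_add' := fun a b => by ext v; simp [dotProduct_add]
    map_smul' := fun c a => by ext v; simp [dotProduct_smul] }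

@[simp] lemma dotB_apply {n : ℕ} (u v : Fin n → ℝ) : dotB u v = v ⬝ᵥ u := rfl

def mvCLM {n : ℕ} (M : Matrix (Fin n) (Fin n) ℝ) : (Fin n → ℝ) →L[ℝ] (Fin n → ℝ) :=
  LinearMap.toContinuousLinearMap M.mulVecLin

@[simp] lemma mvCLM_apply {n : ℕ} (M : Matrix (Fin n) (Fin n) ℝ) (v : Fin n → ℝ) :
    mvCLM M v = M *ᵥ v := rfl

-- derivative of quadratic form
lemma hasFDerivAt_quad {n : ℕ} (M : Matrix (Fin n) (Fin n) ℝ) (hM : M.IsSymm) (η : Fin n → ℝ) :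
    HasFDerivAt (fun ζ : Fin n → ℝ => ζ ⬝ᵥ M *ᵥ ζ) ((2:ℝ) • dC (M *ᵥ η)) η := by
  have h := dotB.hasFDerivAt_of_bilinear ((mvCLM M).hasFDerivAt (x := η)) (hasFDerivAt_id η)
  have hf : (fun ζ : Fin n → ℝ => dotB (mvCLM M ζ) (id ζ)) = fun ζ => ζ ⬝ᵥ M *ᵥ ζ := by
    funext ζ; simp
  rw [hf] at h
  refine h.congr_fderiv ?_
  ext v
  have hsym : η ⬝ᵥ M *ᵥ v = v ⬝ᵥ M *ᵥ η := by
    rw [Matrix.dotProduct_mulVec, ← Matrix.mulVec_transpose, hM.eq, dotProduct_comm]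
  simp [hsym]
  ring

lemma hasFDerivAt_phi {n : ℕ} (M : Matrix (Fin n) (Fin n) ℝ) (hM : M.IsSymm)
    (η : Fin n → ℝ) (hη : 0 < η ⬝ᵥ M *ᵥ η) (t lam : ℝ)
    (hlam : lam = t / (2 * Real.sqrt (η ⬝ᵥ M *ᵥ η))) :
    HasFDerivAt (fun ζ : Fin n → ℝ => (t / (2 * Real.sqrt (ζ ⬝ᵥ M *ᵥ ζ))) • ζ)
      (lam • ContinuousLinearMap.id ℝ (Fin n → ℝ) +
        ((-t / (2 * Real.sqrt (η ⬝ᵥ M *ᵥ η) ^ 3)) • dC (M *ᵥ η)).smulRight η) η := by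
  have hspos : 0 < Real.sqrt (η ⬝ᵥ M *ᵥ η) := Real.sqrt_pos.mpr hη
  have hq := hasFDerivAt_quad M hM η
  have hsq := (Real.hasDerivAt_sqrt hη.ne').comp_hasFDerivAt η hq
  have h2 := hsq.const_mul (2:ℝ)
  have hinv := (hasDerivAt_inv (x := 2 * Real.sqrt (η ⬝ᵥ M *ᵥ η)) (by positivity)).comp_hasFDerivAt η h2
  have hr := hinv.const_mul t
  have hφ := hr.smul (hasFDerivAt_id η)
  refine hφ.congr_fderiv ?_
  ext v i
  simp only [ContinuousLinearMap.add_apply, ContinuousLinearMap.coe_smul',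
    Pi.smul_apply, ContinuousLinearMap.coe_id', id_eq,
    ContinuousLinearMap.smulRight_apply, ContinuousLinearMap.smul_apply, dC_apply,
    smul_eq_mul, hlam, Pi.add_apply, Function.comp_apply]
  field_simp

@[simp] lemma dotLin_apply {n : ℕ} (w v : Fin n → ℝ) : dotLin w v = v ⬝ᵥ w := rfl

lemma range_Aphi {n : ℕ} (M : Matrix (Fin n) (Fin n) ℝ)
    (η : Fin n → ℝ) (hη : 0 < η ⬝ᵥ M *ᵥ η) (t : ℝ) (ht : t ≠ 0) (lam : ℝ)
    (hlam : lam = t / (2 * Real.sqrt (η ⬝ᵥ M *ᵥ η))) :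
    LinearMap.range ((lam • ContinuousLinearMap.id ℝ (Fin n → ℝ) +
        ((-t / (2 * Real.sqrt (η ⬝ᵥ M *ᵥ η) ^ 3)) • dC (M *ᵥ η)).smulRight η)).toLinearMap
      = LinearMap.ker (dotLin (M *ᵥ (lam • η))) := by
  have hspos : 0 < Real.sqrt (η ⬝ᵥ M *ᵥ η) := Real.sqrt_pos.mpr hη
  have hs2 : Real.sqrt (η ⬝ᵥ M *ᵥ η) ^ 2 = η ⬝ᵥ M *ᵥ η := Real.sq_sqrt hη.le
  have hlam0 : lam ≠ 0 := by
    rw [hlam]; exact div_ne_zero ht (by positivity)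
  apply le_antisymm
  · rintro w ⟨v, rfl⟩
    simp only [LinearMap.mem_ker, ContinuousLinearMap.coe_coe, dotLin_apply,
      ContinuousLinearMap.add_apply, ContinuousLinearMap.coe_smul', Pi.smul_apply,
      ContinuousLinearMap.coe_id', id_eq, ContinuousLinearMap.smulRight_apply,
      ContinuousLinearMap.smul_apply, dC_apply, smul_eq_mul,
      Matrix.mulVec_smul, add_dotProduct, smul_dotProduct,
      dotProduct_smul]
    rw [hlam, ← hs2]
    field_simp
    rw [hs2, hs2]
    ring
  · intro w hw
    simp only [LinearMap.mem_ker, dotLin_apply, Matrix.mulVec_smul,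
      dotProduct_smul, smul_eq_mul] at hw
    have hw' : w ⬝ᵥ M *ᵥ η = 0 := by
      rcases mul_eq_zero.mp hw with h | h
      · exact absurd h hlam0
      · exact h
    refine ⟨lam⁻¹ • w, ?_⟩
    simp only [ContinuousLinearMap.coe_coe, ContinuousLinearMap.add_apply,
      ContinuousLinearMap.coe_smul', Pi.smul_apply, ContinuousLinearMap.coe_id', id_eq,
      ContinuousLinearMap.smulRight_apply, ContinuousLinearMap.smul_apply, dC_apply,
      smul_dotProduct, smul_eq_mul, hw', mul_zero, zero_smul, add_zero,
      smul_smul, mul_inv_cancel₀ hlam0, one_smul]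

lemma finrank_ker_dotLin {n : ℕ} (w η : Fin n → ℝ) (h : η ⬝ᵥ w ≠ 0) :
    Module.finrank ℝ (LinearMap.ker (dotLin w)) = n - 1 := by
  have hsurj : LinearMap.range (dotLin w) = ⊤ := by
    rw [LinearMap.range_eq_top]
    intro r
    refine ⟨(r / (η ⬝ᵥ w)) • η, ?_⟩
    simp only [_root_.map_smul, dotLin_apply, smul_eq_mul]
    field_simp
  have hrk := LinearMap.finrank_range_add_finrank_ker (dotLin w)
  rw [hsurj, finrank_top, Module.finrank_self, Module.finrank_fin_fun] at hrk
  omega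

theorem stmt13 {n : ℕ}
    (W : Set (Fin n → ℝ)) (hW : IsOpen W)
    (Q : (Fin n → ℝ) → Matrix (Fin n) (Fin n) ℝ)
    (hQsmooth : ∀ i j, ContDiffOn ℝ (⊤ : ℕ∞) (fun z => Q z i j) W)
    (hQsymm : ∀ z ∈ W, (Q z).IsSymm)
    (hQpsd : ∀ z ∈ W, (Q z).PosSemidef)
    (D : Set (ℝ × ((Fin n → ℝ) × (Fin n → ℝ)))) (hDopen : IsOpen D)
    (hDsub : ∀ q ∈ D, q.2.1 ∈ W)
    (hD0 : ∀ p : (Fin n → ℝ) × (Fin n → ℝ), p.1 ∈ W → ((0 : ℝ), p) ∈ D)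
    (Φ : ℝ → (Fin n → ℝ) × (Fin n → ℝ) → (Fin n → ℝ) × (Fin n → ℝ))
    (hΦmaps : ∀ q ∈ D, (Φ q.1 q.2).1 ∈ W)
    (hΦsmooth : ContDiffOn ℝ (⊤ : ℕ∞) (fun q : ℝ × ((Fin n → ℝ) × (Fin n → ℝ)) => Φ q.1 q.2) D)
    (hΦ0 : ∀ p : (Fin n → ℝ) × (Fin n → ℝ), p.1 ∈ W → Φ 0 p = p)
    (hΦderiv : ∀ q ∈ D, HasDerivAt (fun τ => Φ τ q.2)
      (hamVF (fun p => p.2 ⬝ᵥ (Q p.1).mulVec p.2) (Φ q.1 q.2)) q.1)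
    (x : Fin n → ℝ) (hx : x ∈ W) (t : ℝ) (ht : t ≠ 0)
    (η : Fin n → ℝ) (hη : 0 < η ⬝ᵥ (Q x).mulVec η)
    (lam : ℝ) (hlam : lam = t / (2 * Real.sqrt (η ⬝ᵥ (Q x).mulVec η)))
    (hmem : ((1 : ℝ), (x, lam • η)) ∈ D) :
    Module.finrank ℝ (LinearMap.range
        (fderiv ℝ
          (fun ζ => (Φ 1 (x, (t / (2 * Real.sqrt (ζ ⬝ᵥ (Q x).mulVec ζ))) • ζ)).1)
          η).toLinearMap)
      = Module.finrank ℝ (LinearMap.range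
          (((fderiv ℝ (fun ζ => (Φ 1 (x, ζ)).1) (lam • η)).toLinearMap).domRestrict
            (LinearMap.ker (dotLin ((Q x).mulVec (lam • η)))))) ∧
    (Function.Bijective (fderiv ℝ (fun ζ => (Φ 1 (x, ζ)).1) (lam • η)) →
      Module.finrank ℝ (LinearMap.range
        (fderiv ℝ
          (fun ζ => (Φ 1 (x, (t / (2 * Real.sqrt (ζ ⬝ᵥ (Q x).mulVec ζ))) • ζ)).1)
          η).toLinearMap) = n - 1) := by
  have hM := hQsymm x hx
  have hφ := hasFDerivAt_phi (Q x) hM η hη t lam hlam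
  set Aφ := lam • ContinuousLinearMap.id ℝ (Fin n → ℝ) +
        ((-t / (2 * Real.sqrt (η ⬝ᵥ (Q x) *ᵥ η) ^ 3)) • dC ((Q x) *ᵥ η)).smulRight η with hAφ
  have hφη : (t / (2 * Real.sqrt (η ⬝ᵥ (Q x) *ᵥ η))) • η = lam • η := by rw [hlam]
  -- differentiability of G
  have hΦat : ContDiffAt ℝ (⊤ : ℕ∞) (fun q : ℝ × ((Fin n → ℝ) × (Fin n → ℝ)) => Φ q.1 q.2)
      (1, (x, lam • η)) := hΦsmooth.contDiffAt (hDopen.mem_nhds hmem)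
  have hginner : ContDiffAt ℝ (⊤ : ℕ∞) (fun ζ : Fin n → ℝ => (((1:ℝ), (x, ζ)) : ℝ × ((Fin n → ℝ) × (Fin n → ℝ))))
      (lam • η) := (contDiff_const.prodMk (contDiff_const.prodMk contDiff_id)).contDiffAt
  have hcomp : ContDiffAt ℝ (⊤ : ℕ∞) (fun ζ : Fin n → ℝ => Φ 1 (x, ζ)) (lam • η) := by
    have h := ContDiffAt.comp (g := fun q : ℝ × ((Fin n → ℝ) × (Fin n → ℝ)) => Φ q.1 q.2)
      (f := fun ζ : Fin n → ℝ => (((1:ℝ), (x, ζ)) : ℝ × ((Fin n → ℝ) × (Fin n → ℝ))))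
      (lam • η) hΦat hginner
    exact h
  have hGdiff : DifferentiableAt ℝ (fun ζ : Fin n → ℝ => (Φ 1 (x, ζ)).1) (lam • η) :=
    (hcomp.differentiableAt (by simp)).fst
  set DG := fderiv ℝ (fun ζ : Fin n → ℝ => (Φ 1 (x, ζ)).1) (lam • η) with hDG
  have hG : HasFDerivAt (fun ζ : Fin n → ℝ => (Φ 1 (x, ζ)).1) DG
      ((t / (2 * Real.sqrt (η ⬝ᵥ (Q x) *ᵥ η))) • η) := by
    rw [hφη]; exact hGdiff.hasFDerivAt
  have hE : HasFDerivAt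
      (fun ζ => (Φ 1 (x, (t / (2 * Real.sqrt (ζ ⬝ᵥ (Q x).mulVec ζ))) • ζ)).1)
      (DG.comp Aφ) η := by
    have h := HasFDerivAt.comp (g := fun ζ : Fin n → ℝ => (Φ 1 (x, ζ)).1)
      (f := fun ζ : Fin n → ℝ => (t / (2 * Real.sqrt (ζ ⬝ᵥ (Q x) *ᵥ ζ))) • ζ)
      η hG hφ
    exact h
  have hEf := hE.fderiv
  rw [hEf]
  have hker := range_Aphi (Q x) η hη t ht lam hlam
  have hmain : LinearMap.range ((DG.comp Aφ).toLinearMap)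
      = Submodule.map (DG.toLinearMap) (LinearMap.ker (dotLin ((Q x) *ᵥ (lam • η)))) := by
    rw [ContinuousLinearMap.toLinearMap_comp, LinearMap.range_comp, hker]
  have hlam0 : lam ≠ 0 := by
    rw [hlam]
    exact div_ne_zero ht (by positivity)
  constructor
  · rw [hmain, LinearMap.range_domRestrict]
  · intro hbij
    rw [hmain]
    have hinj : Function.Injective (DG.toLinearMap) := hbij.injective
    rw [← (Submodule.equivMapOfInjective DG.toLinearMap hinj
      (LinearMap.ker (dotLin ((Q x) *ᵥ (lam • η))))).finrank_eq]
    refine finrank_ker_dotLin _ η ?_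
    simp only [Matrix.mulVec_smul, dotProduct_smul, smul_eq_mul]
    exact mul_ne_zero hlam0 hη.ne'
end
end

section
/- Let f be a Schwartz function on ℝ^n and let k, N ∈ ℕ. Then there is a constant C such that for all η, ξ ∈ ℝ^n, |f(η) − Σ_{|α| ≤ k} ∂^α f(ξ) (η−ξ)^α / α!| ≤ C |η − ξ|^{k+1} (1 + dist(0, [η,ξ]))^{−N}, where [η,ξ] denotes the line segment with endpoints η and ξ, and dist(0, [η,ξ]) its distance from the origin. -/
open Real Set

noncomputable section

/-- The partial derivative of a complex-valued function on `ℝ^n` in the `i`-th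
coordinate direction. -/
def pderivE {n : ℕ} (i : Fin n) (f : EuclideanSpace ℝ (Fin n) → ℂ) :
    EuclideanSpace ℝ (Fin n) → ℂ :=
  fun x => fderiv ℝ f x (EuclideanSpace.single i 1)

/-- The multi-index partial derivative `∂^α f`. -/
def mderiv {n : ℕ} (α : Fin n → ℕ) (f : EuclideanSpace ℝ (Fin n) → ℂ) :
    EuclideanSpace ℝ (Fin n) → ℂ :=
  ((List.ofFn fun i : Fin n => (pderivE i)^[α i]).foldr (· ∘ ·) id) f

/-!
Restrict `f` to the line `t ↦ ξ + t • (η - ξ)`. Its `m`-th derivative is `∂_{η - ξ}^m f`, so the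
one-variable Taylor theorem bounds the remainder by `sup ‖∂_{η - ξ}^{k+1} f‖ / k!` over the segment
`[ξ, η]`. Schwartz decay of `D^{k+1} f` gives
`‖∂_{η - ξ}^{k+1} f x‖ ≤ C ‖η - ξ‖^{k+1} (1 + ‖x‖)^{-N}`, and `‖x‖ ≥ dist(0, [η, ξ])` on the
segment. The multi-index form of the Taylor polynomial comes from the multinomial theorem applied
to `∂_v = ∑ vᵢ ∂ᵢ` in the ring of linear operators on Schwartz space, where the `∂ᵢ` commute by
the symmetry of second derivatives.
-/

open LineDeriv Nat

theorem Finset.noncommProd_univ_fin {M : Type*} [Monoid M] {n : ℕ} (f : Fin n → M)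
    (comm : ((Finset.univ : Finset (Fin n)) : Set (Fin n)).Pairwise (Function.onFun Commute f)) :
    Finset.univ.noncommProd f comm = (List.ofFn f).prod := by
  simp only [Finset.noncommProd, Fin.univ_val_map, Multiset.noncommProd_coe]

-- Unlike `Finset.noncommProd`, the list product carries no commutation proof, so it can be
-- rewritten freely afterwards.
theorem Finset.sum_univ_fin_pow_of_commute {A : Type*} [Semiring A] {n : ℕ} (a : Fin n → A)
    (comm : ∀ i j, Commute (a i) (a j)) (m : ℕ) :
    (∑ i, a i) ^ m = ∑ k ∈ Finset.univ.piAntidiag m,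
      (Nat.multinomial Finset.univ k : A) * (List.ofFn fun i => a i ^ k i).prod := by
  rw [Finset.sum_pow_eq_sum_piAntidiag_of_commute _ _ fun i _ j _ _ => comm i j]
  exact Finset.sum_congr rfl fun k _ => congrArg _ (Finset.noncommProd_univ_fin _ _)

theorem List.prod_ofFn_smul {R A : Type*} [CommSemiring R] [Semiring A] [Algebra R A] {n : ℕ}
    (c : Fin n → R) (a : Fin n → A) :
    (List.ofFn fun i => c i • a i).prod = (∏ i, c i) • (List.ofFn a).prod := by
  induction n with
  | zero => simp
  | succ n ih => simp only [List.ofFn_succ, List.prod_cons, ih, Fin.prod_univ_succ,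
      smul_mul_smul_comm]

theorem Finset.sum_filter_sum_le_eq_sum_range_piAntidiag {M : Type*} [AddCommMonoid M]
    (n k : ℕ) (G : (Fin n → ℕ) → M) :
    ∑ α ∈ Finset.univ.filter (fun α : Fin n → Fin (k + 1) => ∑ i, (α i : ℕ) ≤ k),
        G (fun i => α i)
      = ∑ m ∈ Finset.range (k + 1), ∑ α ∈ Finset.univ.piAntidiag m, G α := by
  rw [← Finset.sum_fiberwise_of_maps_to (t := Finset.range (k + 1))
    (g := fun α : Fin n → Fin (k + 1) => ∑ i, (α i : ℕ)) fun α hα => by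
      simpa [Nat.lt_succ_iff] using hα]
  refine Finset.sum_congr rfl fun m hm => Finset.sum_nbij (fun α i => (α i : ℕ)) ?_ ?_ ?_
    fun _ _ => rfl
  · intro α hα
    simp_all [Finset.mem_piAntidiag]
  · intro a _ b _ h
    funext i
    exact Fin.ext (congrFun h i)
  · intro β hβ
    have hsum := (Finset.mem_piAntidiag.1 hβ).1
    have hle : ∀ i, β i < k + 1 := fun i =>
      ((Finset.single_le_sum (fun j _ => Nat.zero_le (β j)) (Finset.mem_univ i)).trans
        hsum.le).trans_lt (Finset.mem_range.1 hm)
    refine ⟨fun i => ⟨β i, hle i⟩, ?_, rfl⟩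
    simp_all [Finset.mem_range]

namespace SchwartzMap

section

variable {E F : Type*} [NormedAddCommGroup E] [NormedSpace ℝ E] [NormedAddCommGroup F]
  [NormedSpace ℝ F]

theorem hasDerivAt_comp_add_smul (g : 𝓢(E, F)) (x v : E) (t : ℝ) :
    HasDerivAt (fun t : ℝ => g (x + t • v)) (∂_{v} g (x + t • v)) t := by
  have hline : HasDerivAt (fun t : ℝ => x + t • v) v t := by
    simpa using ((hasDerivAt_id t).smul_const v).const_add x
  exact (g.hasFDerivAt (x + t • v)).comp_hasDerivAt t hline

theorem iteratedDeriv_comp_add_smul (g : 𝓢(E, F)) (x v : E) (m : ℕ) :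
    iteratedDeriv m (fun t : ℝ => g (x + t • v)) = fun t => (∂_{v}^[m] g) (x + t • v) := by
  induction m generalizing g with
  | zero => rfl
  | succ m ih =>
    rw [iteratedDeriv_succ', Function.iterate_succ_apply, ← ih (∂_{v} g)]
    congr 1
    funext t
    exact (g.hasDerivAt_comp_add_smul x v t).deriv

theorem exists_one_add_norm_pow_mul_iterate_lineDerivOp_le (g : 𝓢(E, F)) (m N : ℕ) :
    ∃ C, ∀ v x : E, (1 + ‖x‖) ^ N * ‖(∂_{v}^[m] g) x‖ ≤ C * ‖v‖ ^ m := by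
  refine ⟨2 ^ N * (Finset.Iic (N, m)).sup (fun p => SchwartzMap.seminorm ℝ p.1 p.2) g,
    fun v x => ?_⟩
  have hmultilinear : ‖(∂_{v}^[m] g) x‖ ≤ ‖iteratedFDeriv ℝ m g x‖ * ‖v‖ ^ m := by
    rw [← iteratedLineDerivOp_const_eq_iter_lineDerivOp, iteratedLineDerivOp_eq_iteratedFDeriv]
    simpa using (iteratedFDeriv ℝ m g x).le_opNorm fun _ => v
  calc (1 + ‖x‖) ^ N * ‖(∂_{v}^[m] g) x‖
      ≤ (1 + ‖x‖) ^ N * ‖iteratedFDeriv ℝ m g x‖ * ‖v‖ ^ m := by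
        rw [mul_assoc]; gcongr
    _ ≤ _ := mul_le_mul_of_nonneg_right
        (one_add_le_sup_seminorm_apply (m := (N, m)) le_rfl le_rfl g x) (by positivity)

theorem contDiff_comp_add_smul (g : 𝓢(E, F)) (x v : E) (n : ℕ∞) :
    ContDiff ℝ n (fun t : ℝ => g (x + t • v)) :=
  (g.smooth n).comp (by fun_prop)

theorem iteratedDerivWithin_comp_add_smul (g : 𝓢(E, F)) (x v : E) (m : ℕ) {t : ℝ}
    (ht : t ∈ Icc (0 : ℝ) 1) :
    iteratedDerivWithin m (fun t : ℝ => g (x + t • v)) (Icc 0 1) t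
      = (∂_{v}^[m] g) (x + t • v) := by
  rw [iteratedDerivWithin_eq_iteratedDeriv (uniqueDiffOn_Icc zero_lt_one)
    (g.contDiff_comp_add_smul x v m).contDiffAt ht, iteratedDeriv_comp_add_smul]

theorem taylorWithinEval_comp_add_smul (g : 𝓢(E, F)) (x v : E) (k : ℕ) :
    taylorWithinEval (fun t : ℝ => g (x + t • v)) k (Icc 0 1) 0 1
      = ∑ m ∈ Finset.range (k + 1), (m ! : ℝ)⁻¹ • (∂_{v}^[m] g) x := by
  rw [taylor_within_apply]
  refine Finset.sum_congr rfl fun m _ => ?_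
  rw [g.iteratedDerivWithin_comp_add_smul x v m (left_mem_Icc.2 zero_le_one)]
  simp

theorem norm_sub_taylor_le (g : 𝓢(E, F)) (x v : E) (k : ℕ) {M : ℝ}
    (hM : ∀ t ∈ Icc (0 : ℝ) 1, ‖(∂_{v}^[k + 1] g) (x + t • v)‖ ≤ M) :
    ‖g (x + v) - ∑ m ∈ Finset.range (k + 1), (m ! : ℝ)⁻¹ • (∂_{v}^[m] g) x‖ ≤ M / k ! := by
  have := taylor_mean_remainder_bound zero_le_one (g.contDiff_comp_add_smul x v (k + 1)).contDiffOn
    (right_mem_Icc.2 zero_le_one) fun t ht => by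
      rw [g.iteratedDerivWithin_comp_add_smul x v (k + 1) ht]
      exact hM t ht
  simpa [taylorWithinEval_comp_add_smul] using this

theorem exists_norm_sub_taylor_mul_le (g : 𝓢(E, F)) (k N : ℕ) :
    ∃ C, ∀ η ξ : E,
      ‖g η - ∑ m ∈ Finset.range (k + 1), (m ! : ℝ)⁻¹ • (∂_{η - ξ}^[m] g) ξ‖ *
          (1 + Metric.infDist 0 (segment ℝ η ξ)) ^ N
        ≤ C * ‖η - ξ‖ ^ (k + 1) := by
  obtain ⟨C, hC⟩ := g.exists_one_add_norm_pow_mul_iterate_lineDerivOp_le (k + 1) N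
  refine ⟨C / k !, fun η ξ => ?_⟩
  set D := Metric.infDist 0 (segment ℝ η ξ)
  have hD0 : 0 ≤ D := Metric.infDist_nonneg
  have hD : 0 < (1 + D) ^ N := by positivity
  have hbound : ∀ t ∈ Icc (0 : ℝ) 1, ‖(∂_{η - ξ}^[k + 1] g) (ξ + t • (η - ξ))‖
      ≤ C * ‖η - ξ‖ ^ (k + 1) / (1 + D) ^ N := by
    intro t ht
    have hseg : ξ + t • (η - ξ) ∈ segment ℝ η ξ := by
      rw [segment_symm, segment_eq_image']
      exact mem_image_of_mem _ ht
    have hdist : D ≤ ‖ξ + t • (η - ξ)‖ := by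
      simpa using Metric.infDist_le_dist_of_mem (x := 0) hseg
    rw [le_div_iff₀ hD, mul_comm]
    calc (1 + D) ^ N * ‖(∂_{η - ξ}^[k + 1] g) (ξ + t • (η - ξ))‖
        ≤ (1 + ‖ξ + t • (η - ξ)‖) ^ N * ‖(∂_{η - ξ}^[k + 1] g) (ξ + t • (η - ξ))‖ := by
          gcongr
      _ ≤ C * ‖η - ξ‖ ^ (k + 1) := hC _ _
  have hremainder := g.norm_sub_taylor_le ξ (η - ξ) k hbound
  rw [add_sub_cancel, div_div, le_div_iff₀ (by positivity)] at hremainder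
  rw [div_mul_eq_mul_div, le_div_iff₀ (by positivity)]
  linarith

theorem lineDerivOp_comm (g : 𝓢(E, F)) (v w : E) :
    ∂_{v} (∂_{w} g) = ∂_{w} (∂_{v} g) := by
  ext x
  have hsymm : IsSymmSndFDerivAt ℝ g x :=
    (g.smooth 2).contDiffAt.isSymmSndFDerivAt (by simp)
  have h := hsymm.iteratedFDeriv_cons (v := v) (w := w)
  rw [← iteratedLineDerivOp_eq_iteratedFDeriv, ← iteratedLineDerivOp_eq_iteratedFDeriv] at h
  exact h

end

variable {n : ℕ}

def partialDerivOp (i : Fin n) : Module.End ℂ 𝓢(EuclideanSpace ℝ (Fin n), ℂ) :=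
  (lineDerivOpCLM ℂ 𝓢(EuclideanSpace ℝ (Fin n), ℂ) (EuclideanSpace.single i (1 : ℝ))).toLinearMap

theorem coe_partialDerivOp_apply (i : Fin n) (g : 𝓢(EuclideanSpace ℝ (Fin n), ℂ)) :
    ⇑(partialDerivOp i g) = pderivE i g := rfl

theorem partialDerivOp_commute (i j : Fin n) : Commute (partialDerivOp i) (partialDerivOp j) :=
  LinearMap.ext fun g => by simpa [partialDerivOp] using g.lineDerivOp_comm _ _

theorem lineDerivOp_eq_sum_partialDerivOp (v : EuclideanSpace ℝ (Fin n))
    (g : 𝓢(EuclideanSpace ℝ (Fin n), ℂ)) :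
    ∂_{v} g = (∑ i, (v i : ℂ) • partialDerivOp i) g := by
  conv_lhs => rw [← (EuclideanSpace.basisFun (Fin n) ℝ).sum_repr v]
  simp [partialDerivOp, lineDerivOp_left_smul, Complex.coe_smul]

theorem mderiv_eq_list_prod_apply (α : Fin n → ℕ) (g : 𝓢(EuclideanSpace ℝ (Fin n), ℂ)) :
    mderiv α g = ⇑((List.ofFn fun i => partialDerivOp i ^ α i).prod g) := by
  have hiter (i : Fin n) (k : ℕ) (h : 𝓢(EuclideanSpace ℝ (Fin n), ℂ)) :
      (pderivE i)^[k] h = ⇑((partialDerivOp i ^ k) h) := by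
    rw [Module.End.pow_apply]
    exact ((Function.Semiconj.iterate_right (f := fun h : 𝓢(_, ℂ) => ⇑h)
      (fun h => coe_partialDerivOp_apply i h) k) h).symm
  rw [mderiv, List.ofFn_eq_map, List.ofFn_eq_map]
  induction List.finRange n with
  | nil => rfl
  | cons i l ih =>
    simp only [List.map_cons, List.foldr_cons, List.prod_cons, Module.End.mul_apply,
      Function.comp_apply, ih, hiter]

theorem iterate_lineDerivOp_apply_eq_sum (v : EuclideanSpace ℝ (Fin n)) (m : ℕ)
    (g : 𝓢(EuclideanSpace ℝ (Fin n), ℂ)) (x : EuclideanSpace ℝ (Fin n)) :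
    (∂_{v}^[m] g) x = ∑ α ∈ Finset.univ.piAntidiag m,
      (Nat.multinomial Finset.univ α : ℂ) * (∏ i, (v i : ℂ) ^ α i) * mderiv α g x := by
  have hL : (∂_{v} : 𝓢(EuclideanSpace ℝ (Fin n), ℂ) → _) = ⇑(∑ i, (v i : ℂ) • partialDerivOp i) :=
    funext (lineDerivOp_eq_sum_partialDerivOp v)
  rw [hL, ← Module.End.pow_apply, Finset.sum_univ_fin_pow_of_commute _
    fun i j => ((partialDerivOp_commute i j).smul_left _).smul_right _]
  simp only [LinearMap.sum_apply, sum_apply]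
  refine Finset.sum_congr rfl fun α _ => ?_
  simp only [smul_pow, List.prod_ofFn_smul, mderiv_eq_list_prod_apply, Module.End.mul_apply,
    Module.End.natCast_apply, LinearMap.smul_apply, smul_apply,
    nsmul_eq_mul, smul_eq_mul]
  ring

theorem inv_factorial_smul_iterate_lineDerivOp_apply (v : EuclideanSpace ℝ (Fin n)) (m : ℕ)
    (g : 𝓢(EuclideanSpace ℝ (Fin n), ℂ)) (x : EuclideanSpace ℝ (Fin n)) :
    (m ! : ℝ)⁻¹ • (∂_{v}^[m] g) x = ∑ α ∈ Finset.univ.piAntidiag m,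
      mderiv α g x * (∏ i, (v i : ℂ) ^ α i) / ((∏ i, (α i)! : ℕ) : ℂ) := by
  rw [iterate_lineDerivOp_apply_eq_sum, Finset.smul_sum]
  refine Finset.sum_congr rfl fun α hα => ?_
  have hspec : ((∏ i, (α i)! : ℕ) : ℂ) * Nat.multinomial Finset.univ α = m ! := by
    rw [← (Finset.mem_piAntidiag.1 hα).1]
    exact_mod_cast Nat.multinomial_spec Finset.univ α
  have hfact : ((∏ i, (α i)! : ℕ) : ℂ) ≠ 0 :=
    Nat.cast_ne_zero.2 (Finset.prod_ne_zero_iff.2 fun i _ => (α i).factorial_ne_zero)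
  have hmult : (Nat.multinomial Finset.univ α : ℂ) ≠ 0 :=
    Nat.cast_ne_zero.2 (Nat.multinomial_pos _ _).ne'
  rw [Complex.real_smul, Complex.ofReal_inv, Complex.ofReal_natCast, ← hspec]
  field_simp

end SchwartzMap

theorem stmt14 {n : ℕ} (f : SchwartzMap (EuclideanSpace ℝ (Fin n)) ℂ) (k N : ℕ) :
    ∃ C : ℝ, ∀ η ξ : EuclideanSpace ℝ (Fin n),
      ‖f η - ∑ α ∈ Finset.univ.filter (fun α : Fin n → Fin (k + 1) => ∑ i, (α i : ℕ) ≤ k),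
          mderiv (fun i => (α i : ℕ)) (fun z => f z) ξ *
            (∏ i, ((η i - ξ i : ℝ) : ℂ) ^ (α i : ℕ)) /
            (((∏ i, Nat.factorial (α i) : ℕ)) : ℂ)‖ *
        (1 + Metric.infDist 0 (segment ℝ η ξ)) ^ N
      ≤ C * ‖η - ξ‖ ^ (k + 1) := by
  obtain ⟨C, hC⟩ := f.exists_norm_sub_taylor_mul_le k N
  refine ⟨C, fun η ξ => ?_⟩
  have htaylor : ∑ α ∈ Finset.univ.filter (fun α : Fin n → Fin (k + 1) => ∑ i, (α i : ℕ) ≤ k),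
        mderiv (fun i => (α i : ℕ)) (fun z => f z) ξ *
          (∏ i, ((η i - ξ i : ℝ) : ℂ) ^ (α i : ℕ)) / (((∏ i, Nat.factorial (α i) : ℕ)) : ℂ)
      = ∑ m ∈ Finset.range (k + 1), (m ! : ℝ)⁻¹ • (∂_{η - ξ}^[m] f) ξ := by
    rw [Finset.sum_filter_sum_le_eq_sum_range_piAntidiag n k fun α =>
      mderiv α f ξ * (∏ i, ((η i - ξ i : ℝ) : ℂ) ^ α i) / ((∏ i, (α i)! : ℕ) : ℂ)]
    simp only [SchwartzMap.inv_factorial_smul_iterate_lineDerivOp_apply, PiLp.sub_apply]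
  rw [htaylor]
  exact hC η ξ
end
end
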